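/- arXiv:2411.08139 — 10 statements merged into one kernel-verified Lean document; each statement's English description precedes it below -/
import Mathlib

section
/- Let φ = (1+√5)/2 be the golden ratio and A = {1, φ, φ², φ³}. Then |AA| = 7, which is strictly less than 3·4 - 4 = 8, yet A is not a set of integers up to dilation; in particular |A+A| = 9 < 4·5/2 = 10, so A is not an additive Sidon set, showing the Sidon Exclusion Zone theorem fails over the reals for n = 4. -/
open Finset Pointwise

set_option maxHeartbeats 1000000 in
theorem stmt_5 (φ : ℝ) (hφ : φ = (1 + Real.sqrt 5) / 2)
    (A : Finset ℝ) (hA : A = {1, φ, φ ^ 2, φ ^ 3}) :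
    (A * A).card = 7 ∧ (A * A).card < 3 * 4 - 4 + 1 ∧
      (A + A).card = 9 ∧ (A + A).card < 4 * 5 / 2 := by
  have hs2 : Real.sqrt 5 ^ 2 = 5 := Real.sq_sqrt (by norm_num)
  have hs0 : (0:ℝ) ≤ Real.sqrt 5 := Real.sqrt_nonneg 5
  have hsl : (2:ℝ) < Real.sqrt 5 := by nlinarith
  have hsu : Real.sqrt 5 < 3 := by nlinarith
  have hφ2 : φ ^ 2 = φ + 1 := by rw [hφ]; linear_combination hs2 / 4
  have hl : (3:ℝ)/2 < φ := by rw [hφ]; linarith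
  have hu : φ < 2 := by rw [hφ]; linarith
  have hφ3 : φ ^ 3 = 2*φ + 1 := by linear_combination (φ + 1) * hφ2
  have hφ4 : φ ^ 4 = 3*φ + 2 := by linear_combination (φ^2 + φ + 2) * hφ2
  have hφ5 : φ ^ 5 = 5*φ + 3 := by linear_combination (φ^3 + φ^2 + 2*φ + 3) * hφ2
  have hφ6 : φ ^ 6 = 8*φ + 5 := by
    linear_combination (φ^4 + φ^3 + 2*φ^2 + 3*φ + 5) * hφ2
  have hmul : A * A = ({1, φ, φ^2, φ^3, φ^4, φ^5, φ^6} : Finset ℝ) := by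
    rw [hA]; ext x
    simp only [Finset.mem_mul, mem_insert, mem_singleton]
    constructor
    · rintro ⟨a, ha, b, hb, rfl⟩
      rcases ha with h|h|h|h <;> rcases hb with h'|h'|h'|h' <;> rw [h, h'] <;>
        ring_nf <;> tauto
    · rintro (h|h|h|h|h|h|h)
      · exact ⟨1, by tauto, 1, by tauto, by rw [h]; try ring⟩
      · exact ⟨1, by tauto, φ, by tauto, by rw [h]; try ring⟩
      · exact ⟨1, by tauto, φ^2, by tauto, by rw [h]; try ring⟩
      · exact ⟨1, by tauto, φ^3, by tauto, by rw [h]; try ring⟩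
      · exact ⟨φ, by tauto, φ^3, by tauto, by rw [h]; try ring⟩
      · exact ⟨φ^2, by tauto, φ^3, by tauto, by rw [h]; try ring⟩
      · exact ⟨φ^3, by tauto, φ^3, by tauto, by rw [h]; try ring⟩
  have hadd : A + A =
      ({2, 1+φ, 2*φ, 1+φ^2, φ+φ^2, 2*φ^2, φ+φ^3, φ^2+φ^3, 2*φ^3} : Finset ℝ) := by
    rw [hA]; ext x
    simp only [Finset.mem_add, mem_insert, mem_singleton]
    constructor
    · rintro ⟨a, ha, b, hb, rfl⟩
      rcases ha with h|h|h|h <;> rcases hb with h'|h'|h'|h' <;> rw [h, h'] <;>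
        simp only [hφ2, hφ3] <;> ring_nf <;> tauto
    · rintro (h|h|h|h|h|h|h|h|h)
      · exact ⟨1, by tauto, 1, by tauto, by rw [h]; try ring⟩
      · exact ⟨1, by tauto, φ, by tauto, by rw [h]; try ring⟩
      · exact ⟨φ, by tauto, φ, by tauto, by rw [h]; try ring⟩
      · exact ⟨1, by tauto, φ^2, by tauto, by rw [h]; try ring⟩
      · exact ⟨φ, by tauto, φ^2, by tauto, by rw [h]; try ring⟩
      · exact ⟨φ^2, by tauto, φ^2, by tauto, by rw [h]; try ring⟩
      · exact ⟨φ, by tauto, φ^3, by tauto, by rw [h]; try ring⟩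
      · exact ⟨φ^2, by tauto, φ^3, by tauto, by rw [h]; try ring⟩
      · exact ⟨φ^3, by tauto, φ^3, by tauto, by rw [h]; try ring⟩
  have hcard_mul : (A * A).card = 7 := by
    rw [hmul]
    rw [card_insert_of_notMem (by
      intro h; simp only [mem_insert, mem_singleton] at h
      rcases h with h|h|h|h|h|h <;> linarith)]
    rw [card_insert_of_notMem (by
      intro h; simp only [mem_insert, mem_singleton] at h
      rcases h with h|h|h|h|h <;> linarith)]
    rw [card_insert_of_notMem (by
      intro h; simp only [mem_insert, mem_singleton] at h
      rcases h with h|h|h|h <;> linarith)]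
    rw [card_insert_of_notMem (by
      intro h; simp only [mem_insert, mem_singleton] at h
      rcases h with h|h|h <;> linarith)]
    rw [card_insert_of_notMem (by
      intro h; simp only [mem_insert, mem_singleton] at h
      rcases h with h|h <;> linarith)]
    rw [card_insert_of_notMem (by
      intro h; simp only [mem_singleton] at h; linarith)]
    rw [card_singleton]
  have hcard_add : (A + A).card = 9 := by
    rw [hadd]
    rw [card_insert_of_notMem (by
      intro h; simp only [mem_insert, mem_singleton] at h
      rcases h with h|h|h|h|h|h|h|h <;> linarith)]
    rw [card_insert_of_notMem (by
      intro h; simp only [mem_insert, mem_singleton] at h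
      rcases h with h|h|h|h|h|h|h <;> linarith)]
    rw [card_insert_of_notMem (by
      intro h; simp only [mem_insert, mem_singleton] at h
      rcases h with h|h|h|h|h|h <;> linarith)]
    rw [card_insert_of_notMem (by
      intro h; simp only [mem_insert, mem_singleton] at h
      rcases h with h|h|h|h|h <;> linarith)]
    rw [card_insert_of_notMem (by
      intro h; simp only [mem_insert, mem_singleton] at h
      rcases h with h|h|h|h <;> linarith)]
    rw [card_insert_of_notMem (by
      intro h; simp only [mem_insert, mem_singleton] at h
      rcases h with h|h|h <;> linarith)]
    rw [card_insert_of_notMem (by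
      intro h; simp only [mem_insert, mem_singleton] at h
      rcases h with h|h <;> linarith)]
    rw [card_insert_of_notMem (by
      intro h; simp only [mem_singleton] at h; linarith)]
    rw [card_singleton]
  refine ⟨hcard_mul, by omega, hcard_add, by omega⟩
end

section
/- Let α be the real root of x³ = x + 1 and A = {1, α, α², α³, α⁴}. Then |AA| = 9 = 2·5 - 1 and |A+A| = 14 < 5·6/2 = 15, so A is not a Sidon set despite |AA| ≤ 3·5 - 4; hence the Sidon Exclusion Zone theorem fails for sets of positive reals with n = 5. -/
/-!
The products α^i α^j are the powers α^0, …, α^8, pairwise distinct because α > 1.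
For the sums, α³ = 1 + α and α⁴ = α + α² place A in ℕ·1 + ℕ·α + ℕ·α², and since
X³ - X - 1 has no rational root it is the minimal polynomial of α, so 1, α, α² are linearly
independent over ℚ. Hence A + A is in bijection with the sumset of the five coordinate vectors,
which has 14 elements: the only coincidence is 1 + α⁴ = α² + α³.
-/

open Finset Pointwise Polynomial

theorem image_pow_range_mul_image_pow_range {M : Type*} [Monoid M] [DecidableEq M] (x : M)
    {m n : ℕ} (hm : m ≠ 0) (hn : n ≠ 0) :
    (range m).image (x ^ ·) * (range n).image (x ^ ·) = (range (m + n - 1)).image (x ^ ·) := by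
  ext y
  simp only [mem_mul, mem_image, mem_range]
  constructor
  · rintro ⟨_, ⟨i, hi, rfl⟩, _, ⟨j, hj, rfl⟩, rfl⟩
    exact ⟨i + j, by omega, pow_add x i j⟩
  · rintro ⟨k, hk, rfl⟩
    refine ⟨_, ⟨min k (m - 1), by omega, rfl⟩,
      _, ⟨k - min k (m - 1), by omega, rfl⟩, ?_⟩
    rw [← pow_add, Nat.add_sub_cancel' (min_le_left _ _)]

theorem natDegree_X_pow_three_sub_X_sub_one {R : Type*} [CommRing R] [Nontrivial R] :
    (X ^ 3 - X - 1 : R[X]).natDegree = 3 := by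
  compute_degree!

theorem irreducible_X_pow_three_sub_X_sub_one : Irreducible (X ^ 3 - X - 1 : ℚ[X]) := by
  have hmonic : (X ^ 3 - X - 1 : ℤ[X]).Monic := by monicity!
  refine irreducible_of_degree_le_three_of_not_isRoot
    (by simp [natDegree_X_pow_three_sub_X_sub_one]) fun q hq => ?_
  have hroot : aeval q (X ^ 3 - X - 1 : ℤ[X]) = 0 := by simpa using hq
  obtain ⟨n, rfl, hn⟩ := exists_integer_of_is_root_of_monic hmonic hroot
  have hunit : IsUnit n := isUnit_of_dvd_one (by simpa using hn)
  rcases Int.isUnit_iff.mp hunit with rfl | rfl <;> norm_num at hq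

theorem minpoly_eq_X_pow_three_sub_X_sub_one {α : ℝ} (hα : α ^ 3 = α + 1) :
    minpoly ℚ α = X ^ 3 - X - 1 :=
  (minpoly.eq_of_irreducible_of_monic irreducible_X_pow_three_sub_X_sub_one
    (by simp [hα]) (by monicity!)).symm

theorem linearIndependent_pow_fin_three {α : ℝ} (hα : α ^ 3 = α + 1) :
    LinearIndependent ℕ fun i : Fin 3 => α ^ (i : ℕ) := by
  have h := linearIndependent_pow (K := ℚ) α
  rw [minpoly_eq_X_pow_three_sub_X_sub_one hα, natDegree_X_pow_three_sub_X_sub_one] at h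
  exact h.restrict_scalars' ℕ

/-- Coordinates of `α ^ 0, …, α ^ 4` in the basis `1, α, α ^ 2`. -/
def powerCoords : Finset (Fin 3 → ℕ) :=
  {![1, 0, 0], ![0, 1, 0], ![0, 0, 1], ![1, 1, 0], ![0, 1, 1]}

theorem card_powerCoords_add_self : (powerCoords + powerCoords).card = 14 := by
  decide

theorem image_linearCombination_powerCoords {α : ℝ} (hα : α ^ 3 = α + 1) :
    powerCoords.image (Fintype.linearCombination ℕ fun i : Fin 3 => α ^ (i : ℕ)) =
      {1, α, α ^ 2, α ^ 3, α ^ 4} := by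
  have hα4 : α ^ 4 = α + α ^ 2 := by linear_combination α * hα
  simp [powerCoords, Fintype.linearCombination_apply, Fin.sum_univ_three, hα, hα4, add_comm]

theorem stmt_6 (α : ℝ) (hα : α ^ 3 = α + 1) (hα1 : 1 < α)
    (A : Finset ℝ) (hA : A = {1, α, α ^ 2, α ^ 3, α ^ 4}) :
    (A * A).card = 9 ∧ (A * A).card ≤ 3 * 5 - 4 ∧
      (A + A).card = 14 ∧ (A + A).card < 5 * 6 / 2 := by
  have hmul : (A * A).card = 9 := by
    have hgeom : A = (range 5).image (α ^ ·) := by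
      rw [hA, show range 5 = {0, 1, 2, 3, 4} from rfl]
      simp
    rw [hgeom, image_pow_range_mul_image_pow_range α (by norm_num) (by norm_num),
      card_image_of_injective _ (pow_right_injective₀ (by positivity) hα1.ne'), card_range]
  have hadd : (A + A).card = 14 := by
    have hinj := (linearIndependent_pow_fin_three hα).fintypeLinearCombination_injective
    rw [hA, ← image_linearCombination_powerCoords hα, ← image_add,
      card_image_of_injective _ hinj, card_powerCoords_add_self]
  exact ⟨hmul, by omega, hadd, by omega⟩
end

section
/- SPP(3) = {(5,6), (6,5), (6,6)}, i.e., for every 3-element set A of positive integers the pair (|A+A|,|AA|) is one of these three, and each of the three pairs is achieved by some 3-element set of positive integers. -/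
open Finset Pointwise

def SPP (n : ℕ) : Set (ℕ × ℕ) :=
  {p | ∃ A : Finset ℕ, (∀ a ∈ A, 0 < a) ∧ A.card = n ∧ p = ((A + A).card, (A * A).card)}

lemma card6 (x1 x2 x3 x4 x5 x6 : ℕ) (h1 : x1 < x2) (h2 : x2 < x3) (h3 : x2 < x4)
    (h4 : x3 ≠ x4) (h5 : x3 < x5) (h6 : x4 < x5) (h7 : x5 < x6) :
    ({x1, x2, x3, x4, x5, x6} : Finset ℕ).card = 6 := by
  rw [Finset.card_insert_of_notMem (by simp only [Finset.mem_insert, Finset.mem_singleton]; omega),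
    Finset.card_insert_of_notMem (by simp only [Finset.mem_insert, Finset.mem_singleton]; omega),
    Finset.card_insert_of_notMem (by simp only [Finset.mem_insert, Finset.mem_singleton]; omega),
    Finset.card_insert_of_notMem (by simp only [Finset.mem_insert, Finset.mem_singleton]; omega),
    Finset.card_insert_of_notMem (by simp only [Finset.mem_singleton]; omega),
    Finset.card_singleton]

lemma card5 (x1 x2 x3 x4 x5 : ℕ) (h1 : x1 < x2) (h2 : x2 < x3) (h3 : x3 < x4) (h4 : x4 < x5) :
    ({x1, x2, x3, x4, x5} : Finset ℕ).card = 5 := by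
  rw [Finset.card_insert_of_notMem (by simp only [Finset.mem_insert, Finset.mem_singleton]; omega),
    Finset.card_insert_of_notMem (by simp only [Finset.mem_insert, Finset.mem_singleton]; omega),
    Finset.card_insert_of_notMem (by simp only [Finset.mem_insert, Finset.mem_singleton]; omega),
    Finset.card_insert_of_notMem (by simp only [Finset.mem_singleton]; omega),
    Finset.card_singleton]

lemma key (a b c : ℕ) (ha : 0 < a) (hab : a < b) (hbc : b < c) :
    ((({a, b, c} : Finset ℕ) + {a, b, c}).card, (({a, b, c} : Finset ℕ) * {a, b, c}).card) = (5, 6) ∨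
    ((({a, b, c} : Finset ℕ) + {a, b, c}).card, (({a, b, c} : Finset ℕ) * {a, b, c}).card) = (6, 5) ∨
    ((({a, b, c} : Finset ℕ) + {a, b, c}).card, (({a, b, c} : Finset ℕ) * {a, b, c}).card) = (6, 6) := by
  have hS : (({a, b, c} : Finset ℕ) + {a, b, c}) = {a+a, a+b, a+c, b+b, b+c, c+c} := by
    ext x
    simp only [Finset.mem_add, Finset.mem_insert, Finset.mem_singleton]
    constructor
    · rintro ⟨y, hy, z, hz, rfl⟩
      rcases hy with rfl | rfl | rfl <;> rcases hz with rfl | rfl | rfl <;> omega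
    · rintro (rfl | rfl | rfl | rfl | rfl | rfl)
      · exact ⟨a, Or.inl rfl, a, Or.inl rfl, rfl⟩
      · exact ⟨a, Or.inl rfl, b, Or.inr (Or.inl rfl), rfl⟩
      · exact ⟨a, Or.inl rfl, c, Or.inr (Or.inr rfl), rfl⟩
      · exact ⟨b, Or.inr (Or.inl rfl), b, Or.inr (Or.inl rfl), rfl⟩
      · exact ⟨b, Or.inr (Or.inl rfl), c, Or.inr (Or.inr rfl), rfl⟩
      · exact ⟨c, Or.inr (Or.inr rfl), c, Or.inr (Or.inr rfl), rfl⟩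
  have hP : (({a, b, c} : Finset ℕ) * {a, b, c}) = {a*a, a*b, a*c, b*b, b*c, c*c} := by
    ext x
    simp only [Finset.mem_mul, Finset.mem_insert, Finset.mem_singleton]
    constructor
    · rintro ⟨y, hy, z, hz, rfl⟩
      rcases hy with rfl | rfl | rfl <;> rcases hz with rfl | rfl | rfl <;> simp [Nat.mul_comm]
    · rintro (rfl | rfl | rfl | rfl | rfl | rfl)
      · exact ⟨a, Or.inl rfl, a, Or.inl rfl, rfl⟩
      · exact ⟨a, Or.inl rfl, b, Or.inr (Or.inl rfl), rfl⟩
      · exact ⟨a, Or.inl rfl, c, Or.inr (Or.inr rfl), rfl⟩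
      · exact ⟨b, Or.inr (Or.inl rfl), b, Or.inr (Or.inl rfl), rfl⟩
      · exact ⟨b, Or.inr (Or.inl rfl), c, Or.inr (Or.inr rfl), rfl⟩
      · exact ⟨c, Or.inr (Or.inr rfl), c, Or.inr (Or.inr rfl), rfl⟩
  have hb : 0 < b := lt_trans ha hab
  have q1 : a*a < a*b := by nlinarith
  have q2 : a*b < a*c := by nlinarith
  have q3 : a*b < b*b := by nlinarith
  have q4 : a*c < b*c := by nlinarith
  have q5 : b*b < b*c := by nlinarith
  have q6 : b*c < c*c := by nlinarith
  rw [hS, hP]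
  by_cases h1 : a + c = b + b
  · by_cases h2 : a * c = b * b
    · exfalso
      obtain ⟨d, rfl⟩ : ∃ d, c = a + d := ⟨c - a, by omega⟩
      have hd : 2 ≤ d := by omega
      have e : (a + (a + d)) * (a + (a + d)) = (b + b) * (b + b) := by rw [h1]
      nlinarith [e, h2]
    · -- sums card 5, products card 6
      left
      have hSet : ({a+a, a+b, a+c, b+b, b+c, c+c} : Finset ℕ) = {a+a, a+b, a+c, b+c, c+c} := by
        ext t
        simp only [Finset.mem_insert, Finset.mem_singleton]
        omega
      rw [hSet, card5 _ _ _ _ _ (by omega) (by omega) (by omega) (by omega),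
        card6 _ _ _ _ _ _ q1 q2 q3 h2 q4 q5 q6]
  · by_cases h2 : a * c = b * b
    · right; left
      have hSet : ({a*a, a*b, a*c, b*b, b*c, c*c} : Finset ℕ) = {a*a, a*b, a*c, b*c, c*c} := by
        ext t
        simp only [Finset.mem_insert, Finset.mem_singleton, ← h2]
        tauto
      rw [hSet, card5 _ _ _ _ _ q1 q2 q4 q6,
        card6 _ _ _ _ _ _ (by omega) (by omega) (by omega) h1 (by omega) (by omega) (by omega)]
    · right; right
      rw [card6 _ _ _ _ _ _ (by omega) (by omega) (by omega) h1 (by omega) (by omega) (by omega),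
        card6 _ _ _ _ _ _ q1 q2 q3 h2 q4 q5 q6]

lemma sorted3 {a b c : ℕ} (hab : a ≠ b) (hac : a ≠ c) (hbc : b ≠ c) :
    ∃ x y z : ℕ, x < y ∧ y < z ∧ ({a, b, c} : Finset ℕ) = {x, y, z} := by
  rcases Nat.lt_or_ge a b with h1 | h1 <;> rcases Nat.lt_or_ge b c with h2 | h2 <;>
    rcases Nat.lt_or_ge a c with h3 | h3
  · exact ⟨a, b, c, h1, h2, rfl⟩
  · exact ⟨a, b, c, h1, h2, rfl⟩
  · exact ⟨a, c, b, by omega, by omega, by ext t; simp only [Finset.mem_insert, Finset.mem_singleton]; tauto⟩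
  · exact ⟨c, a, b, by omega, by omega, by ext t; simp only [Finset.mem_insert, Finset.mem_singleton]; tauto⟩
  · exact ⟨b, a, c, by omega, by omega, by ext t; simp only [Finset.mem_insert, Finset.mem_singleton]; tauto⟩
  · exact ⟨b, c, a, by omega, by omega, by ext t; simp only [Finset.mem_insert, Finset.mem_singleton]; tauto⟩
  · exact ⟨c, b, a, by omega, by omega, by ext t; simp only [Finset.mem_insert, Finset.mem_singleton]; tauto⟩
  · exact ⟨c, b, a, by omega, by omega, by ext t; simp only [Finset.mem_insert, Finset.mem_singleton]; tauto⟩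

theorem stmt_8 : SPP 3 = {(5, 6), (6, 5), (6, 6)} := by
  ext p
  simp only [SPP, Set.mem_setOf_eq, Set.mem_insert_iff, Set.mem_singleton_iff]
  constructor
  · rintro ⟨A, hpos, hcard, rfl⟩
    obtain ⟨a, b, c, hab, hac, hbc, rfl⟩ := Finset.card_eq_three.mp hcard
    obtain ⟨x, y, z, hxy, hyz, heq⟩ := sorted3 hab hac hbc
    have hx : 0 < x := hpos x (heq ▸ Finset.mem_insert_self x {y, z})
    rw [heq]
    exact key x y z hx hxy hyz
  · rintro (rfl | rfl | rfl)
    · exact ⟨{1, 2, 3}, by decide, by decide, by decide⟩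
    · exact ⟨{1, 2, 4}, by decide, by decide, by decide⟩
    · exact ⟨{1, 2, 5}, by decide, by decide, by decide⟩
end

section
/- If A is a set of n positive integers with |AA| ≤ 3n - 4, then A is an additive Sidon set, i.e., |A+A| = n(n+1)/2. -/
/-!
Send `a` to its vector of prime exponents `expVec a ∈ ℕ →₀ ℚ`. This turns `A * A` into the
sumset `B + B` of `B = expVec '' A`, of the same size, and `log` becomes a linear functional that
is injective on `B`, so it orders `B` compatibly with addition.

If `B` is not collinear, Freiman's lemma `#(B + B) ≥ 3 * #B - 3` contradicts `#(A * A) ≤ 3n - 4`.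
It is proved by deleting the `log`-largest or the `log`-smallest point of `B`, whichever keeps the
rest non-collinear: this loses at least three sums.

If `B` is collinear, then for `a < c, y` in `A` the exponent of some prime `p` grows from `a` to
`c`, and so from `a` to `y`, as `log` is monotone along the line. In `a + b = c + d` with `a` the
smallest term this makes `p ^ (vₚ(a) + 1)` divide `b`, `c`, `d` but not `a`; hence `A` is Sidon.
-/

open Finset Pointwise

section Freiman

variable {k V P : Type*} [DivisionRing k] [AddCommGroup V] [Module k V] [AddTorsor V P]

theorem collinear_of_subset_affineSpan_pair {s : Set P} {p q : P} (h : s ⊆ line[k, p, q]) :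
    Collinear k s := by
  refine (collinear_iff_exists_forall_eq_smul_vadd s).2 ⟨p, q -ᵥ p, fun x hx => ?_⟩
  obtain ⟨r, rfl⟩ := mem_affineSpan_pair_iff_exists_lineMap_eq.1 (h hx)
  exact ⟨r, AffineMap.lineMap_apply p q r⟩

theorem three_le_card_of_not_collinear {B : Finset P} (hB : ¬Collinear k (B : Set P)) :
    3 ≤ #B := by
  classical
  by_contra! hcard
  interval_cases h : #B
  · exact hB (by simpa [card_eq_zero.1 h] using collinear_empty k P)
  · obtain ⟨p, rfl⟩ := card_eq_one.1 h
    exact hB (by simpa using collinear_singleton k p)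
  · obtain ⟨p, q, -, rfl⟩ := card_eq_two.1 h
    exact hB (by simpa using collinear_pair k p q)

theorem not_collinear_erase_or_not_collinear_erase [DecidableEq P] {B : Finset P}
    (hB : ¬Collinear k (B : Set P)) (hcard : 4 ≤ #B) {v w : P} (hv : v ∈ B) (hw : w ∈ B)
    (hvw : v ≠ w) :
    ¬Collinear k (B.erase v : Set P) ∨ ¬Collinear k (B.erase w : Set P) := by
  by_contra! ⟨hcolv, hcolw⟩
  have hcard' : 1 < #((B.erase v).erase w) := by
    rw [card_erase_of_mem (mem_erase.2 ⟨hvw.symm, hw⟩), card_erase_of_mem hv]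
    omega
  obtain ⟨x, hx, y, hy, hxy⟩ := one_lt_card.1 hcard'
  simp only [mem_erase] at hx hy
  refine hB (collinear_of_subset_affineSpan_pair (p := x) (q := y) fun z hz => ?_)
  by_cases hzv : z = v
  · exact hcolw.mem_affineSpan_of_mem_of_ne (by simp [hx.1, hx.2.2]) (by simp [hy.1, hy.2.2])
      (by simp [hzv ▸ hvw, hz]) hxy
  · exact hcolv.mem_affineSpan_of_mem_of_ne (by simp [hx.2]) (by simp [hy.2]) (by simp [hzv, hz])
      hxy

variable {W : Type*} [AddCommGroup W] [LinearOrder W] [IsOrderedAddMonoid W] [DecidableEq V]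

theorem three_le_card_add_self_of_card_eq_two {f : V →+ W} {B : Finset V}
    (hf : Set.InjOn f B) (hB : #B = 2) : 3 ≤ #(B + B) := by
  obtain ⟨x, y, hxy, rfl⟩ := card_eq_two.1 hB
  have key : ∀ x y : V, f x < f y → 3 ≤ #({x, y} + {x, y} : Finset V) := by
    intro x y hlt
    have h₁ : f (x + x) < f (x + y) := by simpa only [map_add] using add_lt_add_right hlt (f x)
    have h₂ : f (x + y) < f (y + y) := by simpa only [map_add] using add_lt_add_left hlt (f y)
    calc 3 = #{x + x, x + y, y + y} := by
          rw [card_insert_of_notMem (by simp [ne_of_apply_ne f h₁.ne,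
            ne_of_apply_ne f (h₁.trans h₂).ne]), card_pair (ne_of_apply_ne f h₂.ne)]
      _ ≤ _ := card_le_card (by simp [insert_subset_iff, add_mem_add])
  rcases (hf.ne (by simp) (by simp) hxy).lt_or_gt with hlt | hlt
  · exact key x y hlt
  · exact pair_comm x y ▸ key y x hlt

theorem collinear_of_forall_add_mem_add_erase {f : V →+ W} {B : Finset V} {v a : V}
    (hav : f a < f v) (hamax : ∀ x ∈ B.erase v, f x ≤ f a)
    (hsum : ∀ x ∈ B.erase v, x ≠ a → v + x ∈ B.erase v + B.erase v) :
    Collinear k (B : Set V) := by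
  classical
  refine collinear_of_subset_affineSpan_pair (p := v) (q := a) fun x₀ hx₀ => ?_
  by_contra hx₀L
  -- For `x` the `f`-largest point off the line, both summands of `v + x` have larger `f`, so they
  -- lie on the line, and then so does `x = y + z - v`.
  obtain ⟨x, hx, hxmax⟩ := (B.filter (· ∉ line[k, v, a])).exists_max_image f
    ⟨x₀, mem_filter.2 ⟨hx₀, hx₀L⟩⟩
  obtain ⟨hxB, hxL⟩ := mem_filter.1 hx
  have hxv : x ≠ v := by rintro rfl; exact hxL (left_mem_affineSpan_pair k _ _)
  have hxa : x ≠ a := by rintro rfl; exact hxL (right_mem_affineSpan_pair k _ _)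
  obtain ⟨y, hy, z, hz, hyz⟩ := mem_add.1 (hsum x (mem_erase.2 ⟨hxv, hxB⟩) hxa)
  have mem_line : ∀ u ∈ B.erase v, ∀ u' ∈ B.erase v, u + u' = v + x → u ∈ line[k, v, a] := by
    intro u hu u' hu' huu'
    by_contra huL
    have hux := hxmax u (mem_filter.2 ⟨mem_of_mem_erase hu, huL⟩)
    have : f (v + x) < f (v + x) := calc
      f (v + x) = f u + f u' := by rw [← huu', map_add]
      _ ≤ f x + f a := add_le_add hux (hamax u' hu')
      _ < f x + f v := add_lt_add_right hav _
      _ = f (v + x) := by rw [map_add, add_comm]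
    exact this.false
  have hyL := mem_line y hy z hz hyz
  have hzL := mem_line z hz y hy (by rw [add_comm, hyz])
  have hx_eq : x = (y -ᵥ v) +ᵥ z := by
    rw [vsub_eq_sub, vadd_eq_add, sub_add_eq_add_sub, hyz]
    abel
  exact hxL (hx_eq ▸ AffineSubspace.vadd_mem_of_mem_direction
    (AffineSubspace.vsub_mem_direction hyL (left_mem_affineSpan_pair k v a)) hzL)

theorem card_add_erase_add_three_le {f : V →+ W} {B : Finset V} (hf : Set.InjOn f B)
    (hB : ¬Collinear k (B : Set V)) {v : V} (hv : v ∈ B) (hvmax : ∀ x ∈ B, f x ≤ f v) :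
    #(B.erase v + B.erase v) + 3 ≤ #(B + B) := by
  set B' := B.erase v
  have hB' : B'.Nonempty := by
    rw [← card_pos, card_erase_of_mem hv]
    have := three_le_card_of_not_collinear hB
    omega
  obtain ⟨a, ha, hamax⟩ := B'.exists_max_image f hB'
  obtain ⟨hav, haB⟩ := mem_erase.1 ha
  have hfav : f a < f v := (hvmax a haB).lt_of_ne fun h => hav (hf haB hv h)
  obtain ⟨x, hx, hxa, hvx⟩ : ∃ x ∈ B', x ≠ a ∧ v + x ∉ B' + B' := by
    by_contra! h
    exact hB (collinear_of_forall_add_mem_add_erase hfav hamax h)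
  have hle : ∀ u ∈ B' + B', f u ≤ f a + f a := by
    intro u hu
    obtain ⟨y, hy, z, hz, rfl⟩ := mem_add.1 hu
    rw [map_add]
    exact add_le_add (hamax y hy) (hamax z hz)
  have hvv : v + v ∉ B' + B' := fun h =>
    (hle _ h).not_gt (by rw [map_add]; exact add_lt_add hfav hfav)
  have hva : v + a ∉ B' + B' := fun h =>
    (hle _ h).not_gt (by rw [map_add]; exact add_lt_add_left hfav _)
  have hxv : x ≠ v := (mem_erase.1 hx).1
  have hsub : insert (v + v) (insert (v + a) (insert (v + x) (B' + B'))) ⊆ B + B := by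
    have hB'B : B' ⊆ B := erase_subset v B
    simp only [insert_subset_iff]
    exact ⟨add_mem_add hv hv, add_mem_add hv haB, add_mem_add hv (hB'B hx),
      add_subset_add hB'B hB'B⟩
  calc #(B' + B') + 3 = #(insert (v + v) (insert (v + a) (insert (v + x) (B' + B')))) := by
        rw [card_insert_of_notMem, card_insert_of_notMem, card_insert_of_notMem hvx]
        · simp [hva, hxa.symm]
        · simp [hvv, hav.symm, hxv.symm]
    _ ≤ #(B + B) := card_le_card hsub

/-- Freiman's lemma. The additive map `f` only serves to order `B` compatibly with addition. -/
theorem three_mul_card_sub_three_le_card_add (f : V →+ W) (B : Finset V) (hf : Set.InjOn f B)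
    (hB : ¬Collinear k (B : Set V)) : 3 * #B - 3 ≤ #(B + B) := by
  induction B using Finset.strongInduction with
  | H B ih =>
  have h3 := three_le_card_of_not_collinear hB
  have hne : B.Nonempty := card_pos.1 (by omega)
  obtain ⟨v, hv, hvmax⟩ := B.exists_max_image f hne
  obtain ⟨w, hw, hwmin⟩ := B.exists_min_image f hne
  have hv_step := card_add_erase_add_three_le hf hB hv hvmax
  have hv_card := card_erase_of_mem hv
  rcases h3.eq_or_lt with h3 | h4
  · have := three_le_card_add_self_of_card_eq_two (hf.mono (coe_subset.2 (erase_subset v B)))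
      (by omega : #(B.erase v) = 2)
    omega
  have hvw : v ≠ w := by
    rintro rfl
    have hconst : ∀ x ∈ B, f x = f v := fun x hx => le_antisymm (hvmax x hx) (hwmin x hx)
    have : #B ≤ 1 := card_le_one.2 fun x hx y hy =>
      hf hx hy ((hconst x hx).trans (hconst y hy).symm)
    omega
  rcases not_collinear_erase_or_not_collinear_erase hB (by omega) hv hw hvw with h | h
  · have := ih _ (erase_ssubset hv) (hf.mono (coe_subset.2 (erase_subset v B))) h
    omega
  · have hw_step := card_add_erase_add_three_le (f := -f) (neg_injective.comp_injOn hf) hB hw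
      (fun x hx => by simpa using hwmin x hx)
    have := ih _ (erase_ssubset hw) (hf.mono (coe_subset.2 (erase_subset w B))) h
    have := card_erase_of_mem hw
    omega

end Freiman

def IsSidon {α : Type*} [Add α] (A : Finset α) : Prop :=
  ∀ a ∈ A, ∀ b ∈ A, ∀ c ∈ A, ∀ d ∈ A, a + b = c + d → a = c ∧ b = d ∨ a = d ∧ b = c

theorem IsSidon.card_add_self {α : Type*} [AddCommMagma α] [DecidableEq α] {A : Finset α}
    (hA : IsSidon A) : #(A + A) = #A * (#A + 1) / 2 := by
  set sum : Sym2 α → α := Sym2.lift ⟨(· + ·), add_comm⟩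
  have himage : A + A = A.sym2.image sum := by
    ext z
    simp [mem_add, Sym2.exists, sum, and_assoc]
  have hinj : Set.InjOn sum A.sym2 := by
    intro u hu u' hu' h
    induction u with | h x y => ?_
    induction u' with | h x' y' => ?_
    rw [mem_coe, mk_mem_sym2_iff] at hu hu'
    exact Sym2.eq_iff.2 (hA x hu.1 y hu.2 x' hu'.1 y' hu'.2 h)
  rw [himage, card_image_of_injOn hinj, card_sym2, Nat.choose_two_right, Nat.add_sub_cancel,
    mul_comm]

noncomputable def expVec (n : ℕ) : ℕ →₀ ℚ := n.factorization.mapRange (↑) Nat.cast_zero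

@[simp]
theorem expVec_apply (n p : ℕ) : expVec n p = n.factorization p := rfl

theorem expVec_mul {a b : ℕ} (ha : a ≠ 0) (hb : b ≠ 0) :
    expVec (a * b) = expVec a + expVec b := by
  ext p
  simp [Nat.factorization_mul ha hb]

theorem image_expVec_mul [DecidableEq (ℕ →₀ ℚ)] {A : Finset ℕ} (hA : ∀ a ∈ A, 0 < a) :
    (A * A).image expVec = A.image expVec + A.image expVec := by
  change (image₂ (· * ·) A A).image expVec = image₂ (· + ·) (A.image expVec) (A.image expVec)
  rw [image_image₂, image₂_image_left, image₂_image_right]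
  exact image₂_congr fun a ha b hb => expVec_mul (hA a ha).ne' (hA b hb).ne'

noncomputable def logMap : (ℕ →₀ ℚ) →ₗ[ℚ] ℝ := Finsupp.linearCombination ℚ fun p => Real.log p

theorem logMap_expVec (n : ℕ) : logMap (expVec n) = Real.log n := by
  rw [Real.log_nat_eq_sum_factorization, logMap, Finsupp.linearCombination_apply, expVec,
    Finsupp.sum_mapRange_index (by simp)]
  simp [Rat.smul_def]

theorem injOn_logMap_comp_expVec : Set.InjOn (logMap ∘ expVec) {n | 0 < n} := by
  intro a ha b hb h
  simp only [Function.comp_apply, logMap_expVec] at h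
  exact_mod_cast Real.log_injOn_pos (Set.mem_Ioi.2 (Nat.cast_pos.2 ha))
    (Set.mem_Ioi.2 (Nat.cast_pos.2 hb)) h

theorem three_mul_card_sub_three_le_card_mul_of_not_collinear {A : Finset ℕ}
    (hA : ∀ a ∈ A, 0 < a) (hcol : ¬Collinear ℚ (expVec '' A)) : 3 * #A - 3 ≤ #(A * A) := by
  classical
  set B := A.image expVec
  have hcolB : ¬Collinear ℚ (B : Set (ℕ →₀ ℚ)) := by rwa [coe_image]
  have hinj : Set.InjOn expVec {n | 0 < n} := injOn_logMap_comp_expVec.of_comp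
  have hB : #B = #A := card_image_of_injOn (hinj.mono hA)
  have hBB : #(B + B) = #(A * A) := by
    rw [← image_expVec_mul hA]
    refine card_image_of_injOn (hinj.mono fun x hx => ?_)
    obtain ⟨a, ha, b, hb, rfl⟩ := mem_mul.1 hx
    exact Nat.mul_pos (hA a ha) (hA b hb)
  have := three_mul_card_sub_three_le_card_add logMap.toAddMonoidHom B
    (injOn_logMap_comp_expVec.image_of_comp.mono (by rw [coe_image]; exact Set.image_mono hA))
    hcolB
  omega

theorem factorization_lt_of_collinear {A : Finset ℕ} (hA : ∀ a ∈ A, 0 < a)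
    (hcol : Collinear ℚ (expVec '' A)) {a c y p : ℕ} (ha : a ∈ A) (hc : c ∈ A) (hy : y ∈ A)
    (hac : a < c) (hay : a < y) (hp : a.factorization p < c.factorization p) :
    a.factorization p < y.factorization p := by
  have hne : expVec a ≠ expVec c := fun h =>
    hac.ne (injOn_logMap_comp_expVec.of_comp (hA a ha) (hA c hc) h)
  obtain ⟨r, hr⟩ := mem_affineSpan_pair_iff_exists_lineMap_eq.1
    (hcol.mem_affineSpan_of_mem_of_ne (Set.mem_image_of_mem _ ha) (Set.mem_image_of_mem _ hc)
      (Set.mem_image_of_mem _ hy) hne)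
  rw [AffineMap.lineMap_apply, vsub_eq_sub, vadd_eq_add] at hr
  have hlog := congrArg logMap hr
  simp only [map_add, map_smul, map_sub, logMap_expVec, Rat.smul_def] at hlog
  have hpos : (0 : ℝ) < a := by exact_mod_cast hA a ha
  have hlog_c := Real.log_lt_log hpos (by exact_mod_cast hac : (a : ℝ) < c)
  have hlog_y := Real.log_lt_log hpos (by exact_mod_cast hay : (a : ℝ) < y)
  have hr_pos : (0 : ℚ) < r := by exact_mod_cast (by nlinarith : (0 : ℝ) < r)
  have hcoord := congrArg (· p) hr
  simp only [Finsupp.add_apply, Finsupp.smul_apply, Finsupp.sub_apply, expVec_apply,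
    smul_eq_mul] at hcoord
  have hp' : (a.factorization p : ℚ) < c.factorization p := by exact_mod_cast hp
  have : (a.factorization p : ℚ) < y.factorization p := by nlinarith
  exact_mod_cast this

theorem add_ne_add_of_collinear {A : Finset ℕ} (hA : ∀ a ∈ A, 0 < a)
    (hcol : Collinear ℚ (expVec '' A)) {a b c d : ℕ} (ha : a ∈ A) (hb : b ∈ A) (hc : c ∈ A)
    (hd : d ∈ A) (hac : a < c) (had : a < d) : a + b ≠ c + d := by
  intro habcd
  obtain ⟨p, hp⟩ : ∃ p, a.factorization p < c.factorization p := by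
    have hca : ¬c ∣ a := Nat.not_dvd_of_pos_of_lt (hA a ha) hac
    rw [← Nat.factorization_le_iff_dvd (hA c hc).ne' (hA a ha).ne', Finsupp.le_def] at hca
    simpa using hca
  have hprime : p.Prime := by
    by_contra hp'
    simp [Nat.factorization_eq_zero_of_not_prime c hp'] at hp
  have hdvd : ∀ y ∈ A, a < y → p ^ (a.factorization p + 1) ∣ y := fun y hy hay =>
    (hprime.pow_dvd_iff_le_factorization (hA y hy).ne').2
      (factorization_lt_of_collinear hA hcol ha hc hy hac hay hp)
  have hb' := hdvd b hb (by omega)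
  refine Nat.pow_succ_factorization_not_dvd (hA a ha).ne' hprime ((Nat.dvd_add_left hb').1 ?_)
  rw [habcd]
  exact dvd_add (hdvd c hc hac) (hdvd d hd had)

theorem isSidon_of_collinear {A : Finset ℕ} (hA : ∀ a ∈ A, 0 < a)
    (hcol : Collinear ℚ (expVec '' A)) : IsSidon A := by
  intro a ha b hb c hc d hd h
  by_contra hne
  rcases (by omega : a < c ∧ a < d ∨ b < c ∧ b < d ∨ c < a ∧ c < b ∨ d < a ∧ d < b) with
    ⟨h₁, h₂⟩ | ⟨h₁, h₂⟩ | ⟨h₁, h₂⟩ | ⟨h₁, h₂⟩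
  · exact add_ne_add_of_collinear hA hcol ha hb hc hd h₁ h₂ h
  · exact add_ne_add_of_collinear hA hcol hb ha hc hd h₁ h₂ (by omega)
  · exact add_ne_add_of_collinear hA hcol hc hd ha hb h₁ h₂ h.symm
  · exact add_ne_add_of_collinear hA hcol hd hc ha hb h₁ h₂ (by omega)

theorem stmt_10 (n : ℕ) (A : Finset ℕ) (hpos : ∀ a ∈ A, 0 < a) (hA : A.card = n)
    (h : (A * A).card ≤ 3 * n - 4) :
    (A + A).card = n * (n + 1) / 2 := by
  classical
  subst hA
  by_cases hcol : Collinear ℚ (expVec '' A)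
  · exact (isSidon_of_collinear hpos hcol).card_add_self
  · have h3 : 3 ≤ #A := (three_le_card_of_not_collinear (k := ℚ) (B := A.image expVec)
      (by rwa [coe_image])).trans card_image_le
    have := three_mul_card_sub_three_le_card_mul_of_not_collinear hpos hcol
    omega
end

section
/- For n ≥ 3, |SPP(n)| ≤ (n² - 3n + 4)²/4 − (n−2)²(n−1)/2, where SPP(n) = {(|A+A|,|AA|) : A ⊆ ℕ₊, |A| = n}. -/
/-!
Both `|A + A|` and `|A * A|` lie between `2n - 1` (Cauchy–Davenport, for `A * A` after moving `A`
into the ordered group of positive rationals) and `n(n+1)/2` (both are images of the unordered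
pairs of `A`).

If `|A * A| ≤ 3n - 4`, then `A` lies in a geometric progression `g q^ℤ`. Induct by adjoining the
maximum `v` to `A'`: the new products are the `v a` outside `A' * A'`, and `v v`, `v (max A')` are
always new. If every other `v x` is old, then `v x = z w` with `z, w > x`, and descending through
`A'` puts everything in the progression through `max A'` with ratio `v / max A'`. Otherwise
`|A' * A'| ≤ |A * A| - 3`, so `A'` lies in a progression by induction, and if `v` did not, all
`|A'| + 1` products `v a` would be new, forcing `|A * A| ≥ 3|A'|`.

A progression with rational ratio `q = s/t > 1` is a Sidon set: `1 + q^B = q^C + q^D` with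
`B, C, D ≥ 1` gives `s ∣ t^(B+C+D)`. So `|A + A| = n(n+1)/2`, i.e. `SPP(n)` misses the zone
`[2n-1, n(n+1)/2 - 1] × [2n-1, 3n-4]`, and what is left of the box is counted.
-/

open Finset Pointwise

namespace Finset

variable {α : Type*}

lemma card_sym2_eq_mul_succ_div_two (s : Finset α) : #s.sym2 = #s * (#s + 1) / 2 := by
  rw [card_sym2, Nat.choose_two_right, Nat.add_sub_cancel, mul_comm]

variable [DecidableEq α]

@[to_additive]
lemma mul_self_eq_image_sym2 [CommMagma α] (s : Finset α) :
    s * s = s.sym2.image (Sym2.lift ⟨(· * ·), mul_comm⟩) := by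
  ext x
  simp only [mem_mul, mem_image, Sym2.exists, mk_mem_sym2_iff, Sym2.lift_mk]
  aesop

@[to_additive]
lemma card_mul_self_le [CommMagma α] (s : Finset α) : #(s * s) ≤ #s * (#s + 1) / 2 := by
  rw [mul_self_eq_image_sym2, ← card_sym2_eq_mul_succ_div_two]
  exact card_image_le

lemma card_add_self_eq [AddCommMagma α] {s : Finset α}
    (h : ∀ a ∈ s, ∀ b ∈ s, ∀ c ∈ s, ∀ d ∈ s, a + b = c + d → s(a, b) = s(c, d)) :
    #(s + s) = #s * (#s + 1) / 2 := by
  rw [add_self_eq_image_sym2, ← card_sym2_eq_mul_succ_div_two]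
  refine card_image_of_injOn fun x hx y hy hxy => ?_
  induction x using Sym2.ind
  induction y using Sym2.ind
  rw [mem_coe, mk_mem_sym2_iff] at hx hy
  exact h _ hx.1 _ hx.2 _ hy.1 _ hy.2 hxy

@[to_additive]
lemma card_image_mul_image {β F : Type*} [DecidableEq β] [Mul α] [Mul β] [FunLike F α β]
    [MulHomClass F α β] {f : F} (hf : Function.Injective f) (s : Finset α) :
    #(s.image f * s.image f) = #(s * s) := by
  rw [← image_mul, card_image_of_injective _ hf]

lemma card_insert_mul_insert [CancelCommMonoid α] (v : α) (s : Finset α) :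
    #(insert v s * insert v s) = #(s * s) + #{a ∈ insert v s | v * a ∉ s * s} := by
  have h : insert v s * insert v s = (insert v s).image (v * ·) ∪ s * s := by
    ext x
    simp only [mem_mul, mem_union, mem_insert, mem_image]
    constructor
    · rintro ⟨a, rfl | ha, b, rfl | hb, rfl⟩
      all_goals aesop (add simp mul_comm)
    · aesop
  rw [h, ← card_sdiff_add_card, add_comm, sdiff_eq_filter, filter_image,
    card_image_of_injective _ (mul_right_injective v)]

end Finset

open Subgroup

lemma mul_mul_inv_mem_leftCoset {G : Type*} [Group G] {H : Subgroup G} [H.Normal] {g x y z : G}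
    (hx : x ∈ g • (H : Set G)) (hy : y ∈ g • (H : Set G)) (hz : z ∈ g • (H : Set G)) :
    x * y * z⁻¹ ∈ g • (H : Set G) := by
  rw [mem_leftCoset_iff, SetLike.mem_coe, ← QuotientGroup.eq] at *
  rw [QuotientGroup.mk_mul, QuotientGroup.mk_mul, QuotientGroup.mk_inv, ← hx, ← hy, ← hz,
    mul_inv_cancel_right]

section LinearOrderedCommGroup

variable {G : Type*} [CommGroup G] [LinearOrder G] [IsOrderedMonoid G]

lemma lt_of_mul_eq_mul_of_lt {a b c d : G} (h : a * b = c * d) (hbc : b < c) : d < a :=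
  lt_of_not_ge fun had => (mul_lt_mul_of_le_of_lt had hbc).ne (h.trans (mul_comm c d))

variable [DecidableEq G] {s : Finset G} {v : G}

lemma two_mul_card_sub_one_le_card_mul_self (hs : s.Nonempty) : 2 * #s - 1 ≤ #(s * s) := by
  rw [two_mul]
  convert cauchy_davenport_mul_of_linearOrder_isCancelMul hs hs

lemma mul_notMem_mul_self (hv : ∀ x ∈ s, x < v) {a : G} (ha : ∀ x ∈ s, x ≤ a) :
    v * a ∉ s * s := by
  simp only [mem_mul, not_exists, not_and]
  exact fun z hz w hw h => (ha z hz).not_gt (lt_of_mul_eq_mul_of_lt h (hv w hw))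

lemma insert_subset_leftCoset_zpowers (hs : s.Nonempty) (hv : ∀ x ∈ s, x < v)
    (h : ∀ x ∈ s, x ≠ s.max' hs → v * x ∈ s * s) :
    ((insert v s : Finset G) : Set G) ⊆
      s.max' hs • (zpowers ((s.max' hs)⁻¹ * v) : Set G) := by
  classical
  set y := s.max' hs
  set C := y • (zpowers (y⁻¹ * v) : Set G)
  have hyC : y ∈ C := (mem_leftCoset_iff y).2 (by simp)
  have hvC : v ∈ C := (mem_leftCoset_iff y).2 (mem_zpowers _)
  suffices hsC : ∀ x ∈ s, x ∈ C by
    simpa [Set.insert_subset_iff] using ⟨hvC, hsC⟩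
  -- a largest element of `s` outside `C`: `v x = z w` factors it through larger elements
  by_contra! hbad
  have hne : (s.filter (· ∉ C)).Nonempty := by simpa [Finset.Nonempty] using hbad
  obtain ⟨x, hx, hxmax⟩ := (s.filter (· ∉ C)).exists_max_image id hne
  obtain ⟨hxs, hxC⟩ := mem_filter.1 hx
  have mem_of_lt : ∀ u ∈ s, x < u → u ∈ C := fun u hu hxu => by
    by_contra huC
    exact hxu.not_ge (hxmax u (mem_filter.2 ⟨hu, huC⟩))
  obtain ⟨z, hz, w, hw, hzw⟩ := mem_mul.1 (h x hxs fun e => hxC (e ▸ hyC))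
  have hzC := mem_of_lt z hz (lt_of_mul_eq_mul_of_lt hzw (hv w hw))
  have hwC := mem_of_lt w hw (lt_of_mul_eq_mul_of_lt ((mul_comm w z).trans hzw) (hv z hz))
  have hxzw : x = z * w * v⁻¹ := by rw [hzw, mul_inv_cancel_comm]
  exact hxC (hxzw ▸ mul_mul_inv_mem_leftCoset hzC hwC hvC)

lemma filter_mul_notMem_mul_self_eq {g : G} {H : Subgroup G} (hv : ∀ x ∈ s, x < v)
    (hs : (s : Set G) ⊆ g • (H : Set G)) (hvC : v ∉ g • (H : Set G)) :
    {a ∈ insert v s | v * a ∉ s * s} = insert v s := by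
  refine filter_true_of_mem fun a ha => ?_
  rcases mem_insert.1 ha with rfl | ha
  · exact mul_notMem_mul_self hv fun x hx => (hv x hx).le
  · rintro hva
    obtain ⟨z, hz, w, hw, hzw⟩ := mem_mul.1 hva
    have hv' : v = z * w * a⁻¹ := by rw [hzw, mul_inv_cancel_right]
    exact hvC (hv' ▸ mul_mul_inv_mem_leftCoset (hs hz) (hs hw) (hs ha))

lemma three_le_card_filter_mul_notMem_mul_self (hs : s.Nonempty) (hv : ∀ x ∈ s, x < v) {x : G}
    (hx : x ∈ s) (hxy : x ≠ s.max' hs) (hvx : v * x ∉ s * s) :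
    3 ≤ #{a ∈ insert v s | v * a ∉ s * s} := by
  have hy := max'_mem s hs
  refine two_lt_card_iff.2 ⟨x, s.max' hs, v, ?_, ?_, ?_, hxy, (hv x hx).ne, (hv _ hy).ne⟩
  · exact mem_filter.2 ⟨mem_insert_of_mem hx, hvx⟩
  · exact mem_filter.2 ⟨mem_insert_of_mem hy, mul_notMem_mul_self hv (le_max' s)⟩
  · exact mem_filter.2 ⟨mem_insert_self v s, mul_notMem_mul_self hv fun z hz => (hv z hz).le⟩

theorem exists_subset_leftCoset_zpowers_of_card_mul_self_le (s : Finset G)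
    (hs : #(s * s) + 4 ≤ 3 * #s) :
    ∃ g q : G, 1 < q ∧ (s : Set G) ⊆ g • (zpowers q : Set G) := by
  induction s using Finset.induction_on_max with
  | empty => simp at hs
  | insert v s hv ih =>
    obtain rfl | hne := s.eq_empty_or_nonempty
    · simp at hs
    have hvs : v ∉ s := fun h => (hv v h).false
    have hcount := card_insert_mul_insert v s
    rw [card_insert_of_notMem hvs] at hs
    by_cases hnew : ∀ x ∈ s, x ≠ s.max' hne → v * x ∈ s * s
    · refine ⟨s.max' hne, _, ?_, insert_subset_leftCoset_zpowers hne hv hnew⟩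
      exact lt_inv_mul_iff_mul_lt.2 ((mul_one _).trans_lt (hv _ (max'_mem s hne)))
    obtain ⟨x, hx, hxy, hvx⟩ : ∃ x ∈ s, x ≠ s.max' hne ∧ v * x ∉ s * s := by
      simpa using hnew
    have h3 := three_le_card_filter_mul_notMem_mul_self hne hv hx hxy hvx
    obtain ⟨g, q, hq, hsC⟩ := ih (by omega)
    refine ⟨g, q, hq, ?_⟩
    rw [coe_insert, Set.insert_subset_iff]
    refine ⟨by_contra fun hvC => ?_, hsC⟩
    rw [filter_mul_notMem_mul_self_eq hv hsC hvC, card_insert_of_notMem hvs] at hcount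
    have := two_mul_card_sub_one_le_card_mul_self hne
    omega

end LinearOrderedCommGroup

namespace Rat

lemma one_add_pow_ne_pow_add_pow {q : ℚ} (hq : 1 < q) {B C D : ℕ} (hB : B ≠ 0) (hC : C ≠ 0)
    (hD : D ≠ 0) : 1 + q ^ B ≠ q ^ C + q ^ D := by
  intro h
  set s := q.num
  set t : ℤ := (q.den : ℤ)
  have hqt : q * t = s := by exact_mod_cast q.mul_den_eq_num
  have key : t ^ (B + C + D) + s ^ B * t ^ (C + D) = s ^ C * t ^ (B + D) + s ^ D * t ^ (B + C) := by
    have : (t : ℚ) ^ (B + C + D) + (q * t) ^ B * t ^ (C + D) =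
        (q * t) ^ C * t ^ (B + D) + (q * t) ^ D * t ^ (B + C) := by
      linear_combination (t : ℚ) ^ (B + C + D) * h
    rw [hqt] at this
    exact_mod_cast this
  have hdvd : s ∣ t ^ (B + C + D) := by
    have hsum : s ∣ s ^ C * t ^ (B + D) + s ^ D * t ^ (B + C) :=
      dvd_add (dvd_mul_of_dvd_left (dvd_pow_self s hC) _)
        (dvd_mul_of_dvd_left (dvd_pow_self s hD) _)
    rw [← key] at hsum
    exact (dvd_add_left (dvd_mul_of_dvd_left (dvd_pow_self s hB) _)).1 hsum
  have hcop : IsCoprime s (t ^ (B + C + D)) :=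
    (Int.isCoprime_iff_gcd_eq_one.2 (by simpa [s, t, Int.gcd] using q.reduced)).pow_right
  have hs : (1 : ℚ) < s := by
    have ht : (1 : ℚ) ≤ t := by simp [t, Nat.one_le_iff_ne_zero]
    rw [← hqt]
    nlinarith
  rcases Int.isUnit_iff.1 (hcop.isUnit_of_dvd hdvd) with h1 | h1 <;> norm_num [h1] at hs

variable {g q : ℚ}

lemma exists_pow_of_lt_of_mem_range (hg : 0 < g) (hq : 1 < q) {a x : ℚ}
    (ha : a ∈ Set.range fun k : ℤ => g * q ^ k) (hx : x ∈ Set.range fun k : ℤ => g * q ^ k)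
    (hax : a < x) : ∃ k : ℕ, k ≠ 0 ∧ x = a * q ^ k := by
  obtain ⟨m, rfl⟩ := ha
  obtain ⟨n, rfl⟩ := hx
  have hmn : m < n := (zpow_lt_zpow_iff_right₀ hq).1 (lt_of_mul_lt_mul_left hax hg.le)
  refine ⟨(n - m).toNat, by omega, ?_⟩
  rw [← zpow_natCast, Int.toNat_of_nonneg (by omega), mul_assoc, ← zpow_add₀ (by positivity),
    add_sub_cancel]

lemma sym2_eq_of_add_eq_add (hg : 0 < g) (hq : 1 < q) {a b c d : ℚ}
    (ha : a ∈ Set.range fun k : ℤ => g * q ^ k) (hb : b ∈ Set.range fun k : ℤ => g * q ^ k)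
    (hc : c ∈ Set.range fun k : ℤ => g * q ^ k) (hd : d ∈ Set.range fun k : ℤ => g * q ^ k)
    (h : a + b = c + d) : s(a, b) = s(c, d) := by
  wlog hab : a ≤ b generalizing a b
  · exact Sym2.eq_swap.trans (this hb ha (by linarith) (le_of_not_ge hab))
  wlog hcd : c ≤ d generalizing c d
  · exact (this hd hc (by linarith) (le_of_not_ge hcd)).trans Sym2.eq_swap
  wlog hac : a ≤ c generalizing a b c d
  · exact (this hc hd hcd ha hb h.symm hab (le_of_not_ge hac)).symm
  obtain rfl | hac := hac.eq_or_lt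
  · rw [add_left_cancel h]
  obtain ⟨B, hB, rfl⟩ := exists_pow_of_lt_of_mem_range hg hq ha hb (by linarith)
  obtain ⟨C, hC, rfl⟩ := exists_pow_of_lt_of_mem_range hg hq ha hc hac
  obtain ⟨D, hD, rfl⟩ := exists_pow_of_lt_of_mem_range hg hq ha hd (by linarith)
  have ha0 : a ≠ 0 := by obtain ⟨m, rfl⟩ := ha; positivity
  refine absurd (mul_left_cancel₀ ha0 ?_) (one_add_pow_ne_pow_add_pow hq hB hC hD)
  linear_combination h

end Rat

lemma exists_posRat_finset_image_val_eq (A : Finset ℕ) (hA : ∀ a ∈ A, 0 < a) :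
    ∃ B : Finset {x : ℚ // 0 < x}, #B = #A ∧ #(B * B) = #(A * A) ∧
      B.image Subtype.val = A.image ((↑) : ℕ → ℚ) := by
  set B := (A.image ((↑) : ℕ → ℚ)).subtype (0 < ·)
  have hB : B.image Subtype.val = A.image ((↑) : ℕ → ℚ) := by
    rw [← Function.Embedding.coe_subtype, ← map_eq_image, subtype_map_of_mem]
    simpa using hA
  have hval : Function.Injective (⟨(↑), fun _ _ => rfl⟩ : {x : ℚ // 0 < x} →ₙ* ℚ) :=
    Subtype.val_injective
  refine ⟨B, ?_, ?_, hB⟩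
  · rw [← card_image_of_injective B Subtype.val_injective, hB,
      card_image_of_injective A Nat.cast_injective]
  · rw [← card_image_mul_image hval, ← card_image_mul_image (f := Nat.castRingHom ℚ)
      Nat.cast_injective]
    exact congrArg (fun s => #(s * s)) hB

lemma two_mul_card_sub_one_le_card_mul_self_of_pos {A : Finset ℕ} (hA : ∀ a ∈ A, 0 < a)
    (hne : A.Nonempty) : 2 * #A - 1 ≤ #(A * A) := by
  obtain ⟨B, hB, hBB, -⟩ := exists_posRat_finset_image_val_eq A hA
  have := two_mul_card_sub_one_le_card_mul_self (s := B)
    (by rw [← card_pos, hB]; exact hne.card_pos)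
  omega

theorem card_add_self_eq_of_card_mul_self_le {A : Finset ℕ} (hA : ∀ a ∈ A, 0 < a)
    (h : #(A * A) + 4 ≤ 3 * #A) : #(A + A) = #A * (#A + 1) / 2 := by
  obtain ⟨B, hB, hBB, hBA⟩ := exists_posRat_finset_image_val_eq A hA
  obtain ⟨g, q, hq, hBC⟩ := exists_subset_leftCoset_zpowers_of_card_mul_self_le B (by omega)
  have hgp : ∀ x ∈ A.image ((↑) : ℕ → ℚ),
      x ∈ Set.range fun k : ℤ => (g : ℚ) * (q : ℚ) ^ k := by
    rw [← hBA]
    intro x hx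
    obtain ⟨b, hb, rfl⟩ := mem_image.1 hx
    obtain ⟨k, hk⟩ := mem_zpowers_iff.1 ((mem_leftCoset_iff g).1 (hBC hb))
    exact ⟨k, show (g : ℚ) * (q : ℚ) ^ k = b by
      rw [← Positive.coe_zpow, ← Positive.val_mul, hk, mul_inv_cancel_left]⟩
  rw [← card_image_add_image (f := Nat.castAddMonoidHom ℚ) Nat.cast_injective,
    ← card_image_of_injective A (Nat.cast_injective (R := ℚ))]
  exact card_add_self_eq fun a ha b hb c hc d hd =>
    Rat.sym2_eq_of_add_eq_add g.2 hq (hgp a ha) (hgp b hb) (hgp c hc) (hgp d hd)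

def sppBox (n : ℕ) : Finset (ℕ × ℕ) :=
  Icc (2 * n - 1) (n * (n + 1) / 2) ×ˢ Icc (2 * n - 1) (n * (n + 1) / 2)

def sidonExclusionZone (n : ℕ) : Finset (ℕ × ℕ) :=
  Icc (2 * n - 1) (n * (n + 1) / 2 - 1) ×ˢ Icc (2 * n - 1) (3 * n - 4)

lemma SPP_subset_sppBox_sdiff_sidonExclusionZone (n : ℕ) (hn : 3 ≤ n) :
    SPP n ⊆ ↑(sppBox n \ sidonExclusionZone n) := by
  rintro _ ⟨A, hA, rfl, rfl⟩
  have hne : A.Nonempty := card_pos.1 (by omega)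
  have hadd := cauchy_davenport_add_of_linearOrder_isCancelAdd hne hne
  have hmul := two_mul_card_sub_one_le_card_mul_self_of_pos hA hne
  have := card_add_self_le A
  have := card_mul_self_le A
  have hsidon := card_add_self_eq_of_card_mul_self_le (A := A) hA
  simp only [sppBox, sidonExclusionZone, coe_sdiff, coe_product, coe_Icc, Set.mem_sdiff,
    Set.mem_prod, Set.mem_Icc, not_and]
  generalize #A * (#A + 1) / 2 = M at *
  omega

lemma card_sppBox_sdiff_sidonExclusionZone (n : ℕ) (hn : 3 ≤ n) :
    #(sppBox n \ sidonExclusionZone n) =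
      (n ^ 2 - 3 * n + 4) ^ 2 / 4 - (n - 2) ^ 2 * (n - 1) / 2 := by
  -- with `K = (n - 1)(n - 2)/2` the box has side `K + 1` and the zone is `K × (n - 2)`
  obtain ⟨m, rfl⟩ : ∃ m, n = m + 3 := ⟨n - 3, by omega⟩
  obtain ⟨K, hK⟩ : ∃ K, (m + 1) * (m + 2) = 2 * K := (Nat.even_mul_succ_self (m + 1)).two_dvd
  have hKm : m + 1 ≤ K := by nlinarith
  have hM : (m + 3) * (m + 3 + 1) / 2 = K + 2 * m + 5 := by
    rw [show (m + 3) * (m + 3 + 1) = 2 * (K + 2 * m + 5) by linarith,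
      Nat.mul_div_cancel_left _ two_pos]
  have hbox : ((m + 3) ^ 2 - 3 * (m + 3) + 4) ^ 2 / 4 = (K + 1) ^ 2 := by
    have : (m + 3) ^ 2 + 2 = 3 * (m + 3) + 2 * K := by linarith
    rw [show (m + 3) ^ 2 - 3 * (m + 3) + 4 = 2 * (K + 1) by omega, mul_pow]
    norm_num
  have hzone : (m + 3 - 2) ^ 2 * (m + 3 - 1) / 2 = K * (m + 1) := by
    rw [show m + 3 - 2 = m + 1 by omega, show m + 3 - 1 = m + 2 by omega, sq, mul_assoc, hK,
      mul_left_comm, Nat.mul_div_cancel_left _ two_pos, mul_comm]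
  rw [sppBox, sidonExclusionZone, hM, card_sdiff_of_subset (product_subset_product
      (Icc_subset_Icc_right (by omega)) (Icc_subset_Icc_right (by omega))),
    card_product, card_product, Nat.card_Icc, Nat.card_Icc, Nat.card_Icc, hbox, hzone, sq,
    show K + 2 * m + 5 + 1 - (2 * (m + 3) - 1) = K + 1 by omega,
    show K + 2 * m + 5 - 1 + 1 - (2 * (m + 3) - 1) = K by omega,
    show 3 * (m + 3) - 4 + 1 - (2 * (m + 3) - 1) = m + 1 by omega]

theorem stmt_11 (n : ℕ) (hn : 3 ≤ n) :
    (SPP n).ncard ≤ (n ^ 2 - 3 * n + 4) ^ 2 / 4 - (n - 2) ^ 2 * (n - 1) / 2 := by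
  rw [← card_sppBox_sdiff_sidonExclusionZone n hn, ← Set.ncard_coe_finset]
  exact Set.ncard_le_ncard (SPP_subset_sppBox_sdiff_sidonExclusionZone n hn) (finite_toSet _)
end

section
/- Let A be a set of n ≥ 3 positive real numbers with |A+A| ≤ 3n−4 and |AA| < n(n+1)/2. Assume (Freiman's (3n−4)-theorem) that A is contained in an arithmetic progression {a, a+d, ..., a+(2n−4)d} with d > 0. Then there exist integers 0 ≤ i < k ≤ ℓ < j ≤ 2n−4 with a/d = (ij − kℓ)/(k + ℓ − i − j); in particular some dilation of A is a subset of (ij−kℓ)/(k+ℓ−i−j) + {0,1,...,2n−4}. -/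
/-!
Since `|AA|` is smaller than the number `n(n+1)/2` of unordered pairs from `A`, two distinct pairs
have the same product: `x₁ y₁ = x₂ y₂` with `x₁ < x₂ ≤ y₂ < y₁`. Writing these as `a + i d`,
`a + j d`, `a + k d`, `a + l d` and expanding gives `a (i + j - k - l) + d (i j - k l) = 0`, and
`k + l - i - j` cannot vanish, since then `i j - k l = -(k - i)(l - i) ≠ 0`.
-/

open Finset Pointwise

namespace Sym2

variable {α : Type*} [LinearOrder α] {s : Finset α} {z : Sym2 α}

theorem inf_mem_of_mem_sym2 (hz : z ∈ s.sym2) : z.inf ∈ s := by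
  induction z with | _ a b
  rw [mk_mem_sym2_iff] at hz
  rcases min_choice a b with h | h <;> simp [h, hz]

theorem sup_mem_of_mem_sym2 (hz : z ∈ s.sym2) : z.sup ∈ s := by
  induction z with | _ a b
  rw [mk_mem_sym2_iff] at hz
  rcases max_choice a b with h | h <;> simp [h, hz]

end Sym2

section OrderedRing

variable {R : Type*} [CommRing R] [LinearOrder R] [IsStrictOrderedRing R]

theorem Finset.exists_mul_eq_mul_of_card_mul_lt {A : Finset R} (hpos : ∀ x ∈ A, 0 < x)
    (hmul : #(A * A) < #A * (#A + 1) / 2) :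
    ∃ x₁ ∈ A, ∃ y₁ ∈ A, ∃ x₂ ∈ A, ∃ y₂ ∈ A,
      x₁ < x₂ ∧ x₂ ≤ y₂ ∧ y₂ < y₁ ∧ x₁ * y₁ = x₂ * y₂ := by
  have hcard : #(A * A) < #A.sym2 := by
    rwa [card_sym2, Nat.choose_two_right, Nat.add_sub_cancel, Nat.mul_comm (#A + 1)]
  obtain ⟨z, hz, w, hw, hzw, heq⟩ := exists_ne_map_eq_of_card_lt_of_maps_to hcard
    (f := fun z => z.inf * z.sup) fun z hz =>
      mul_mem_mul (Sym2.inf_mem_of_mem_sym2 hz) (Sym2.sup_mem_of_mem_sym2 hz)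
  have hinf : z.inf ≠ w.inf := by
    intro hinf
    refine hzw (Sym2.inf_eq_inf_and_sup_eq_sup.1 ⟨hinf, ?_⟩)
    rw [hinf] at heq
    exact mul_left_cancel₀ (hpos _ (Sym2.inf_mem_of_mem_sym2 hw)).ne' heq
  wlog hlt : z.inf < w.inf generalizing z w
  · exact this w hw z hz hzw.symm heq.symm hinf.symm (hinf.lt_or_gt.resolve_left hlt)
  have hw₁ := hpos _ (Sym2.inf_mem_of_mem_sym2 hw)
  have hz₁ := hpos _ (Sym2.inf_mem_of_mem_sym2 hz)
  refine ⟨_, Sym2.inf_mem_of_mem_sym2 hz, _, Sym2.sup_mem_of_mem_sym2 hz,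
    _, Sym2.inf_mem_of_mem_sym2 hw, _, Sym2.sup_mem_of_mem_sym2 hw,
    hlt, w.inf_le_sup, ?_, heq⟩
  by_contra! hle
  have := mul_lt_mul_of_lt_of_le_of_nonneg_of_pos hlt hle hz₁.le (hw₁.trans_le w.inf_le_sup)
  exact this.ne heq

end OrderedRing

section OrderedField

variable {K : Type*} [Field K] [LinearOrder K] [IsStrictOrderedRing K]

theorem div_eq_of_mul_eq_mul_of_lt_of_le {a d i j k l : K} (hd : d ≠ 0) (hik : i < k)
    (hkl : k ≤ l)
    (heq : (a + i * d) * (a + j * d) = (a + k * d) * (a + l * d)) :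
    a / d = (i * j - k * l) / (k + l - i - j) := by
  have hlin : a * (i + j - k - l) + d * (i * j - k * l) = 0 := by
    have : d * (a * (i + j - k - l) + d * (i * j - k * l)) = 0 := by linear_combination heq
    exact (mul_eq_zero.1 this).resolve_left hd
  have hden : k + l - i - j ≠ 0 := by
    intro hden
    have hprod : i * j - k * l = 0 := by
      have : d * (i * j - k * l) = 0 := by linear_combination hlin + a * hden
      exact (mul_eq_zero.1 this).resolve_left hd
    exact (mul_pos (sub_pos.2 hik) (sub_pos.2 (hik.trans_le hkl))).ne'
      (by linear_combination -hprod - i * hden)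
  rw [div_eq_div_iff hd hden]
  linear_combination -hlin

end OrderedField

theorem stmt_12_general (n : ℕ) (A : Finset ℝ) (hA : A.card = n)
    (hpos : ∀ x ∈ A, 0 < x)
    (hprod : (A * A).card < n * (n + 1) / 2)
    (a d : ℝ) (hd : 0 < d)
    (hAP : ↑A ⊆ (fun i : ℕ => a + i * d) '' {i | i ≤ 2 * n - 4}) :
    ∃ i k l j : ℕ, i < k ∧ k ≤ l ∧ l < j ∧ j ≤ 2 * n - 4 ∧
      a / d = ((i : ℝ) * j - k * l) / ((k : ℝ) + l - i - j) := by
  subst hA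
  obtain ⟨x₁, hx₁, y₁, hy₁, x₂, hx₂, y₂, hy₂, hx₁x₂, hx₂y₂, hy₂y₁, heq⟩ :=
    exists_mul_eq_mul_of_card_mul_lt hpos hprod
  obtain ⟨i, -, rfl⟩ := hAP hx₁
  obtain ⟨j, hj, rfl⟩ := hAP hy₁
  obtain ⟨k, -, rfl⟩ := hAP hx₂
  obtain ⟨l, -, rfl⟩ := hAP hy₂
  have hik : i < k := by simpa [hd] using hx₁x₂
  have hkl : k ≤ l := by simpa [hd] using hx₂y₂
  have hlj : l < j := by simpa [hd] using hy₂y₁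
  exact ⟨i, k, l, j, hik, hkl, hlj, hj, div_eq_of_mul_eq_mul_of_lt_of_le hd.ne'
    (by exact_mod_cast hik) (by exact_mod_cast hkl) heq⟩

theorem stmt_12 (n : ℕ) (hn : 3 ≤ n) (A : Finset ℝ) (hA : A.card = n)
    (hpos : ∀ x ∈ A, 0 < x)
    (hsum : (A + A).card ≤ 3 * n - 4) (hprod : (A * A).card < n * (n + 1) / 2)
    (a d : ℝ) (hd : 0 < d)
    (hAP : ↑A ⊆ (fun i : ℕ => a + i * d) '' {i | i ≤ 2 * n - 4}) :
    ∃ i k l j : ℕ, i < k ∧ k ≤ l ∧ l < j ∧ j ≤ 2 * n - 4 ∧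
      a / d = ((i : ℝ) * j - k * l) / ((k : ℝ) + l - i - j) :=
  stmt_12_general n A hA hpos hprod a d hd hAP
end

section
/- Let A be a set of n ≥ 3 positive real numbers with min A = 1, contained in a geometric progression G = {1, r, r², ..., r^m} with r > 1 and m ≤ 2n−4, and suppose |A+A| < n(n+1)/2. Then r is a root of a polynomial x^j − x^ℓ − x^k + 1 for some integers 0 < k ≤ ℓ < j ≤ m, and moreover 1 < r < 2. -/
open Finset Pointwise

example (r : ℝ) (hr : 1 < r) (i j : ℕ) (h : i < j) : r ^ i < r ^ j :=
  pow_lt_pow_right₀ hr h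

private lemma core (r : ℝ) (hr : 1 < r) (m a b c d : ℕ)
    (ham : a ≤ m) (hba : b ≤ a) (hdc : d ≤ c) (hca : c ≤ a)
    (heq : r ^ a + r ^ b = r ^ c + r ^ d)
    (hne : ¬(a = c ∧ b = d)) :
    ∃ k l j : ℕ, 0 < k ∧ k ≤ l ∧ l < j ∧ j ≤ m ∧
      r ^ j - r ^ l - r ^ k + 1 = 0 := by
  have hr0 : (0:ℝ) < r := by linarith
  have hmono : StrictMono (fun n : ℕ => r ^ n) := fun i j h => pow_lt_pow_right₀ hr h
  have hac : c < a := by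
    rcases lt_or_eq_of_le hca with h | h
    · exact h
    · exfalso; subst h
      have : r ^ b = r ^ d := by linarith
      exact hne ⟨rfl, hmono.injective this⟩
  have hbd : b < d := by
    by_contra h
    push_neg at h
    have h1 : r ^ c < r ^ a := hmono hac
    have h2 : r ^ d ≤ r ^ b := hmono.monotone h
    linarith
  refine ⟨d - b, c - b, a - b, by omega, by omega, by omega, by omega, ?_⟩
  have e1 : r ^ (a - b) * r ^ b = r ^ a := by rw [← pow_add]; congr 1; omega
  have e2 : r ^ (c - b) * r ^ b = r ^ c := by rw [← pow_add]; congr 1; omega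
  have e3 : r ^ (d - b) * r ^ b = r ^ d := by rw [← pow_add]; congr 1; omega
  have hpb : (0:ℝ) < r ^ b := pow_pos hr0 b
  have key : (r ^ (a-b) - r ^ (c-b) - r ^ (d-b) + 1) * r ^ b
      = r ^ a - r ^ c - r ^ d + r ^ b := by
    rw [add_mul, sub_mul, sub_mul, one_mul, e1, e2, e3]
  have h0 : (r ^ (a-b) - r ^ (c-b) - r ^ (d-b) + 1) * r ^ b = 0 := by
    rw [key]; linarith
  rcases mul_eq_zero.mp h0 with h | h
  · exact h
  · exact absurd h (ne_of_gt hpb)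

private lemma key_s13 (r : ℝ) (hr : 1 < r) (m a b c d : ℕ)
    (ham : a ≤ m) (hbm : b ≤ m) (hcm : c ≤ m) (hdm : d ≤ m)
    (heq : r ^ a + r ^ b = r ^ c + r ^ d)
    (hne : ¬(a = c ∧ b = d)) (hne' : ¬(a = d ∧ b = c)) :
    ∃ k l j : ℕ, 0 < k ∧ k ≤ l ∧ l < j ∧ j ≤ m ∧
      r ^ j - r ^ l - r ^ k + 1 = 0 := by
  have heq1 : r ^ b + r ^ a = r ^ d + r ^ c := by linarith
  have heq2 : r ^ c + r ^ d = r ^ a + r ^ b := by linarith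
  have heq3 : r ^ d + r ^ c = r ^ b + r ^ a := by linarith
  have heq4 : r ^ a + r ^ b = r ^ d + r ^ c := by linarith
  have heq5 : r ^ b + r ^ a = r ^ c + r ^ d := by linarith
  have heq6 : r ^ c + r ^ d = r ^ b + r ^ a := by linarith
  have heq7 : r ^ d + r ^ c = r ^ a + r ^ b := by linarith
  rcases le_total b a with h1 | h1 <;> rcases le_total d c with h2 | h2
  · rcases le_total c a with h3 | h3
    · exact core r hr m a b c d ham h1 h2 h3 heq (by tauto)
    · exact core r hr m c d a b hcm h2 h1 h3 heq2 (by tauto)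
  · rcases le_total d a with h3 | h3
    · exact core r hr m a b d c ham h1 h2 h3 heq4 (by tauto)
    · exact core r hr m d c a b hdm h2 h1 h3 heq7 (by tauto)
  · rcases le_total c b with h3 | h3
    · exact core r hr m b a c d hbm h1 h2 h3 heq5 (by tauto)
    · exact core r hr m c d b a hcm h2 h1 h3 heq6 (by tauto)
  · rcases le_total d b with h3 | h3
    · exact core r hr m b a d c hbm h1 h2 h3 heq1 (by tauto)
    · exact core r hr m d c b a hdm h2 h1 h3 heq3 (by tauto)

private lemma rlt2 (r : ℝ) (hr : 1 < r) (k l j : ℕ) (hk : 0 < k) (hkl : k ≤ l)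
    (hlj : l < j) (hrel : r ^ j - r ^ l - r ^ k + 1 = 0) : r < 2 := by
  have hr0 : (0:ℝ) < r := by linarith
  have hmono : StrictMono (fun n : ℕ => r ^ n) := fun i j h => pow_lt_pow_right₀ hr h
  have h1 : r ^ k ≤ r ^ l := hmono.monotone hkl
  have h2 : r ^ (l + 1) ≤ r ^ j := hmono.monotone hlj
  have h3 : r ^ (l + 1) = r * r ^ l := by ring
  have hpl : (0:ℝ) < r ^ l := pow_pos hr0 l
  nlinarith

theorem stmt_13 (n m : ℕ) (hn : 3 ≤ n) (hm : m ≤ 2 * n - 4) (r : ℝ) (hr : 1 < r)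
    (A : Finset ℝ) (hA : A.card = n) (h1 : 1 ∈ A) (hmin : ∀ x ∈ A, 1 ≤ x)
    (hG : ↑A ⊆ (fun i : ℕ => r ^ i) '' {i | i ≤ m})
    (hsum : (A + A).card < n * (n + 1) / 2) :
    (∃ k l j : ℕ, 0 < k ∧ k ≤ l ∧ l < j ∧ j ≤ m ∧
      r ^ j - r ^ l - r ^ k + 1 = 0) ∧ r < 2 := by
  -- the sum map on sym2 is not injective
  have hcard : (A + A).card < A.sym2.card := by
    rw [Finset.card_sym2, hA]
    have : (n + 1).choose 2 = n * (n + 1) / 2 := by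
      rw [Nat.choose_two_right, Nat.add_sub_cancel, Nat.mul_comm]
    omega
  have hmaps : ∀ s ∈ A.sym2, Sym2.lift ⟨fun a b => a + b, fun a b => add_comm a b⟩ s ∈ A + A := by
    intro s hs
    induction s using Sym2.ind with
    | _ x y =>
      rw [Finset.mk_mem_sym2_iff] at hs
      simpa using Finset.add_mem_add hs.1 hs.2
  obtain ⟨s, hs, t, ht, hst, hfeq⟩ :=
    Finset.exists_ne_map_eq_of_card_lt_of_maps_to hcard hmaps
  induction s using Sym2.ind with
  | _ x y =>
  induction t using Sym2.ind with
  | _ z w =>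
  rw [Finset.mk_mem_sym2_iff] at hs ht
  simp only [Sym2.lift_mk] at hfeq
  -- get exponents
  obtain ⟨ex, hexm, hex⟩ := hG hs.1
  obtain ⟨ey, heym, hey⟩ := hG hs.2
  obtain ⟨ez, hezm, hez⟩ := hG ht.1
  obtain ⟨ew, hewm, hew⟩ := hG ht.2
  simp only [Set.mem_setOf_eq] at hexm heym hezm hewm
  simp only at hex hey hez hew
  have heq : r ^ ex + r ^ ey = r ^ ez + r ^ ew := by
    rw [hex, hey, hez, hew]; exact hfeq
  have hsne : ¬(ex = ez ∧ ey = ew) := by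
    rintro ⟨h1', h2'⟩
    exact hst (by rw [Sym2.eq_iff]; left
                  exact ⟨by rw [← hex, ← hez, h1'], by rw [← hey, ← hew, h2']⟩)
  have hsne' : ¬(ex = ew ∧ ey = ez) := by
    rintro ⟨h1', h2'⟩
    exact hst (by rw [Sym2.eq_iff]; right
                  exact ⟨by rw [← hex, ← hew, h1'], by rw [← hey, ← hez, h2']⟩)
  obtain ⟨k, l, j, hk, hkl, hlj, hjm, hrel⟩ :=
    key_s13 r hr m ex ey ez ew hexm heym hezm hewm heq hsne hsne'
  exact ⟨⟨k, l, j, hk, hkl, hlj, hjm, hrel⟩, rlt2 r hr k l j hk hkl hlj hrel⟩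
end

section
/- Let φ = (1+√5)/2 and A = {1, φ, φ², φ³}. Then |A+A| = 9 and |AA| = 7; hence (9,7) ∈ SPP_{ℝ₊}(4) while (by the Sidon Exclusion Zone theorem over the integers) (9,7) ∉ SPP(4), so SPP(4) ≠ SPP_{ℝ₊}(4). -/
open Finset Pointwise

def SPPR (n : ℕ) : Set (ℕ × ℕ) :=
  {p | ∃ A : Finset ℝ, (∀ a ∈ A, 0 < a) ∧ A.card = n ∧ p = ((A + A).card, (A * A).card)}

/-!
For `0 < a < b < c < d` the seven products `a² < ab < ac < ad < bd < cd < d²` are distinct, so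
`|AA| = 7` forces `b² = ac`, `bc = ad`, `c² = bd`: `A` is a geometric progression. For such `A`
the nine sums `2a < a + b < 2b < a + c < b + c < a + d < b + d < c + d < 2d` are distinct (the
three non-obvious inequalities are AM-GM), so `|A + A| = 9` forces `2c = a + d`, which for a
geometric progression means `(c / b)² = c / b + 1`, i.e. `c / b = φ`. Thus `{1, φ, φ², φ³}`
realises `(9, 7)`, and no set of positive integers does because `φ` is irrational.
-/

namespace Finset

@[to_additive]
theorem mul_self_insert_four {α : Type*} [DecidableEq α] [CommMagma α] (a b c d : α) :
    ({a, b, c, d} : Finset α) * {a, b, c, d} =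
      {a * a, a * b, a * c, a * d, b * b, b * c, b * d, c * c, c * d, d * d} := by
  ext x
  simp only [mem_mul, mem_insert, mem_singleton]
  constructor
  · rintro ⟨y, hy, z, hz, rfl⟩
    rcases hy with rfl | rfl | rfl | rfl <;> rcases hz with rfl | rfl | rfl | rfl <;>
      simp [mul_comm]
  · rintro (rfl | rfl | rfl | rfl | rfl | rfl | rfl | rfl | rfl | rfl) <;>
      exact ⟨_, by simp, _, by simp, rfl⟩

theorem card_toFinset_of_isChain_lt {α : Type*} [DecidableEq α] [Preorder α] {l : List α}
    (hl : l.IsChain (· < ·)) : #l.toFinset = l.length :=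
  List.toFinset_card_of_nodup hl.pairwise.nodup

theorem card_eq_length_iff_subset {α : Type*} [DecidableEq α] [Preorder α] {l : List α}
    {s : Finset α} (hl : l.IsChain (· < ·)) (hsub : l.toFinset ⊆ s) :
    #s = l.length ↔ s ⊆ l.toFinset := by
  rw [← card_toFinset_of_isChain_lt hl]
  exact ⟨fun h => (eq_of_subset_of_card_le hsub h.le).ge,
    fun h => by rw [Subset.antisymm h hsub]⟩

@[to_additive]
theorem card_image_mul_self_of_injective {α β F : Type*} [DecidableEq α] [DecidableEq β]
    [Mul α] [Mul β] [FunLike F α β] [MulHomClass F α β] (f : F) (hf : Function.Injective f)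
    (s : Finset α) : #(s.image f * s.image f) = #(s * s) := by
  rw [← image_mul, card_image_of_injective _ hf]

theorem exists_lt_lt_lt_eq_of_card_eq_four {α : Type*} [LinearOrder α] {s : Finset α}
    (hs : #s = 4) : ∃ a b c d, a < b ∧ b < c ∧ c < d ∧ s = {a, b, c, d} := by
  have hl := s.length_sort (· ≤ ·)
  have hsorted := s.sortedLT_sort.pairwise
  have hs' := s.sort_toFinset (· ≤ ·)
  rw [hs] at hl
  match hm : s.sort (· ≤ ·), hl with
  | [a, b, c, d], _ =>
    rw [hm] at hsorted hs'
    simp only [List.pairwise_cons] at hsorted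
    refine ⟨a, b, c, d, hsorted.1 b (by simp), hsorted.2.1 c (by simp),
      hsorted.2.2.1 d (by simp), ?_⟩
    rw [← hs']
    simp

end Finset

section OrderedRing

variable {R : Type*} [CommRing R] [LinearOrder R] [IsStrictOrderedRing R]

def IsGeometricQuadruple (a b c d : R) : Prop :=
  b * b = a * c ∧ b * c = a * d ∧ c * c = b * d

variable {a b c d : R}

theorem card_mul_self_insert_four_eq_seven_iff (ha : 0 < a) (hab : a < b) (hbc : b < c)
    (hcd : c < d) :
    #(({a, b, c, d} : Finset R) * {a, b, c, d}) = 7 ↔ IsGeometricQuadruple a b c d := by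
  have hb := ha.trans hab
  have hc := hb.trans hbc
  have hd := hc.trans hcd
  have o1 : a * a < a * b := by gcongr
  have o2 : a * b < a * c := by gcongr
  have o3 : a * c < a * d := by gcongr
  have o4 : a * d < b * d := by gcongr
  have o5 : b * d < c * d := by gcongr
  have o6 : c * d < d * d := by gcongr
  have o7 : a * b < b * b := by gcongr
  have o8 : b * b < b * c := by gcongr
  have o9 : b * c < b * d := by gcongr
  have o10 : a * c < b * c := by gcongr
  have o11 : b * c < c * c := by gcongr
  have o12 : c * c < c * d := by gcongr
  have hchain : [a * a, a * b, a * c, a * d, b * d, c * d, d * d].IsChain (· < ·) := by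
    simp [*]
  rw [mul_self_insert_four]
  refine (card_eq_length_iff_subset hchain (by simp [insert_subset_iff])).trans ?_
  simp only [insert_subset_iff, singleton_subset_iff, List.mem_toFinset, List.mem_cons,
    List.not_mem_nil, or_false, true_or, or_true, true_and, and_true]
  constructor
  · rintro ⟨h1, h2, h3⟩
    obtain e2 : b * c = a * d := by
      rcases h2 with h | h | h | h | h | h | h <;> first | exact h | order
    obtain e1 : b * b = a * c := by
      rcases h1 with h | h | h | h | h | h | h <;> first | exact h | order
    obtain e3 : c * c = b * d := by
      rcases h3 with h | h | h | h | h | h | h <;> first | exact h | order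
    exact ⟨e1, e2, e3⟩
  · rintro ⟨e1, e2, e3⟩
    simp [e1, e2, e3]

theorem card_add_self_insert_four_eq_nine_iff (ha : 0 < a) (hab : a < b) (hbc : b < c)
    (hcd : c < d) (hg : IsGeometricQuadruple a b c d) :
    #(({a, b, c, d} : Finset R) + {a, b, c, d}) = 9 ↔ a + d = c + c := by
  obtain ⟨e1, e2, e3⟩ := hg
  have hb := ha.trans hab
  have hc := hb.trans hbc
  have hd := hc.trans hcd
  have amgm1 : b + b < a + c := by nlinarith [mul_pos (sub_pos.2 hbc) (sub_pos.2 hbc)]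
  have amgm2 : b + c < a + d := by nlinarith [mul_pos (sub_pos.2 (hbc.trans hcd)) (sub_pos.2 hcd)]
  have amgm3 : c + c < b + d := by nlinarith [mul_pos (sub_pos.2 hcd) (sub_pos.2 hcd)]
  have hchain :
      [a + a, a + b, b + b, a + c, b + c, a + d, b + d, c + d, d + d].IsChain (· < ·) := by
    simp only [List.isChain_cons_cons, List.isChain_singleton, and_true]
    refine ⟨?_, ?_, amgm1, ?_, amgm2, ?_, ?_, ?_⟩ <;> linarith
  rw [add_self_insert_four]
  refine (card_eq_length_iff_subset hchain (by simp [insert_subset_iff])).trans ?_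
  simp only [insert_subset_iff, singleton_subset_iff, List.mem_toFinset, List.mem_cons,
    List.not_mem_nil, or_false, true_or, or_true, true_and, and_true]
  constructor
  · rintro (h | h | h | h | h | h | h | h | h) <;> first | exact h.symm | linarith
  · intro h
    simp [h]

theorem IsGeometricQuadruple.mul_self_eq (hg : IsGeometricQuadruple a b c d) (hbc : b < c)
    (h : a + d = c + c) : c * c = c * b + b * b := by
  obtain ⟨e1, -, e3⟩ := hg
  have hfactor : (c - b) * (c * c - c * b - b * b) = 0 := by
    linear_combination b * e1 + c * e3 + b * c * h
  have := (mul_eq_zero.1 hfactor).resolve_left (sub_ne_zero.2 hbc.ne')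
  linear_combination this

end OrderedRing

open goldenRatio in
theorem Real.eq_goldenRatio_of_sq_eq {x : ℝ} (hx : 0 ≤ x) (h : x ^ 2 = x + 1) : x = φ := by
  have hfactor : (x - φ) * (x - ψ) = 0 := by
    calc (x - φ) * (x - ψ) = x ^ 2 - (φ + ψ) * x + φ * ψ := by ring
      _ = 0 := by rw [Real.goldenRatio_add_goldenConj, Real.goldenRatio_mul_goldenConj]; linarith
  refine sub_eq_zero.1 ((mul_eq_zero.1 hfactor).resolve_right ?_)
  linarith [Real.goldenConj_neg]

theorem Nat.mul_self_ne_mul_add_mul_self {m n : ℕ} (hm : 0 < m) : n * n ≠ n * m + m * m := by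
  intro h
  have hsq : ((n : ℝ) / m) ^ 2 = n / m + 1 := by
    have h' : (n : ℝ) * n = n * m + m * m := by exact_mod_cast h
    field_simp
    linear_combination h'
  refine Real.goldenRatio_irrational.ne_rational n m ?_
  push_cast
  exact (Real.eq_goldenRatio_of_sq_eq (by positivity) hsq).symm

theorem nine_seven_notMem_SPP_four : (9, 7) ∉ SPP 4 := by
  rintro ⟨B, hpos, hcard, hpair⟩
  obtain ⟨hadd, hmul⟩ := Prod.mk.inj hpair
  have hinj : Function.Injective (Nat.castRingHom ℝ) := Nat.cast_injective
  set A := B.image (Nat.castRingHom ℝ)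
  have hA4 : #A = 4 := by rw [card_image_of_injective _ hinj, hcard]
  obtain ⟨a, b, c, d, hab, hbc, hcd, hA⟩ := exists_lt_lt_lt_eq_of_card_eq_four hA4
  have hA9 : #(({a, b, c, d} : Finset ℝ) + {a, b, c, d}) = 9 := by
    rw [← hA, card_image_add_self_of_injective _ hinj, hadd]
  have hA7 : #(({a, b, c, d} : Finset ℝ) * {a, b, c, d}) = 7 := by
    rw [← hA, card_image_mul_self_of_injective _ hinj, hmul]
  have hcast : ∀ x ∈ A, ∃ n : ℕ, 0 < n ∧ (n : ℝ) = x := by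
    intro x hx
    obtain ⟨n, hn, rfl⟩ := mem_image.1 hx
    exact ⟨n, hpos n hn, rfl⟩
  obtain ⟨k, hk, rfl⟩ := hcast a (by simp [hA])
  obtain ⟨m, hm, rfl⟩ := hcast b (by simp [hA])
  obtain ⟨n, -, rfl⟩ := hcast c (by simp [hA])
  have hk' : (0 : ℝ) < k := by exact_mod_cast hk
  have hg := (card_mul_self_insert_four_eq_seven_iff hk' hab hbc hcd).1 hA7
  have hgold := hg.mul_self_eq hbc
    ((card_add_self_insert_four_eq_nine_iff hk' hab hbc hcd hg).1 hA9)
  exact Nat.mul_self_ne_mul_add_mul_self hm (by exact_mod_cast hgold)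

theorem stmt_17 (φ : ℝ) (hφ : φ = (1 + Real.sqrt 5) / 2)
    (A : Finset ℝ) (hA : A = {1, φ, φ ^ 2, φ ^ 3}) :
    (A + A).card = 9 ∧ (A * A).card = 7 ∧
      (9, 7) ∈ SPPR 4 ∧ (9, 7) ∉ SPP 4 ∧ SPP 4 ≠ SPPR 4 := by
  have hsq : φ ^ 2 = φ + 1 := hφ ▸ Real.goldenRatio_sq
  have h1 : 1 < φ := hφ ▸ Real.one_lt_goldenRatio
  have h2 : φ < φ ^ 2 := by nlinarith
  have h3 : φ ^ 2 < φ ^ 3 := by nlinarith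
  have hg : IsGeometricQuadruple 1 φ (φ ^ 2) (φ ^ 3) := ⟨by ring, by ring, by ring⟩
  have h7 : #(A * A) = 7 := by
    rw [hA, card_mul_self_insert_four_eq_seven_iff one_pos h1 h2 h3]
    exact hg
  have h9 : #(A + A) = 9 := by
    rw [hA, card_add_self_insert_four_eq_nine_iff one_pos h1 h2 h3 hg]
    linear_combination (φ - 1) * hsq
  have h4 : #A = 4 := by
    simpa [hA] using
      card_toFinset_of_isChain_lt (l := [1, φ, φ ^ 2, φ ^ 3]) (by simp [h1, h2, h3])
  have hpos : ∀ x ∈ A, 0 < x := by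
    simp only [hA, mem_insert, mem_singleton]
    rintro x (rfl | rfl | rfl | rfl) <;> linarith
  have hSPPR : (9, 7) ∈ SPPR 4 := ⟨A, hpos, h4, by rw [h9, h7]⟩
  exact ⟨h9, h7, hSPPR, nine_seven_notMem_SPP_four,
    fun h => nine_seven_notMem_SPP_four (h ▸ hSPPR)⟩
end

section
/- For every integer t with 2n−1 ≤ t ≤ n(n+1)/2, there exists a set A of n positive integers with |A+A| = t, and there exists a set B of n positive integers with |BB| = t. -/
open Finset Pointwise

lemma block_lemma (n m : ℕ) (hn : 2 ≤ n) (h1 : n ≤ m) (h2 : m ≤ 2*n-2) :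
    ∃ A : Finset ℕ, (∀ a ∈ A, 0 < a) ∧ A.card = n ∧ (A+A).card = m + n - 1 := by
  refine ⟨insert m (Icc 1 (n-1)), ?_, ?_, ?_⟩
  · intro a ha
    simp only [Finset.mem_insert, Finset.mem_Icc] at ha
    omega
  · rw [card_insert_of_notMem (by simp only [Finset.mem_Icc]; omega), Nat.card_Icc]
    omega
  · have hAA : insert m (Icc 1 (n-1)) + insert m (Icc 1 (n-1))
        = insert (2*m) (Icc 2 (m+n-1)) := by
      ext x
      simp only [Finset.mem_add, Finset.mem_insert, Finset.mem_Icc]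
      constructor
      · rintro ⟨a, ha, b, hb, rfl⟩
        omega
      · rintro (rfl | ⟨h2x, hxu⟩)
        · exact ⟨m, Or.inl rfl, m, Or.inl rfl, by ring⟩
        · by_cases hx1 : x ≤ n
          · exact ⟨1, Or.inr ⟨le_refl 1, by omega⟩, x-1, Or.inr ⟨by omega, by omega⟩, by omega⟩
          · by_cases hx2 : x ≤ 2*n-2
            · exact ⟨x-(n-1), Or.inr ⟨by omega, by omega⟩, n-1, Or.inr ⟨by omega, by omega⟩,
                by omega⟩
            · exact ⟨m, Or.inl rfl, x-m, Or.inr ⟨by omega, by omega⟩, by omega⟩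
    rw [hAA, card_insert_of_notMem (by simp only [Finset.mem_Icc]; omega), Nat.card_Icc]
    omega

lemma step_lemma (A' : Finset ℕ) (hpos : ∀ a ∈ A', 0 < a) (hne : A'.Nonempty) :
    ∃ A : Finset ℕ, (∀ a ∈ A, 0 < a) ∧ A.card = A'.card + 1 ∧
      (A+A).card = (A'+A').card + A'.card + 1 := by
  set M := A'.max' hne with hM
  set x := 2*M+1 with hx
  have hxM : ∀ a ∈ A', a ≤ M := fun a ha => A'.le_max' a ha
  have hxn : x ∉ A' := fun h => by have := hxM x h; omega
  refine ⟨insert x A', ?_, ?_, ?_⟩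
  · intro a ha
    rcases Finset.mem_insert.1 ha with rfl | ha
    · omega
    · exact hpos a ha
  · exact card_insert_of_notMem hxn
  · have key : insert x A' + insert x A' = insert (x+x) ((A'+A') ∪ A'.image (· + x)) := by
      ext y
      simp only [Finset.mem_add, Finset.mem_insert, Finset.mem_union, Finset.mem_image]
      constructor
      · rintro ⟨a, ha, b, hb, rfl⟩
        rcases ha with rfl | ha <;> rcases hb with rfl | hb
        · exact Or.inl rfl
        · exact Or.inr (Or.inr ⟨b, hb, by omega⟩)
        · exact Or.inr (Or.inr ⟨a, ha, rfl⟩)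
        · exact Or.inr (Or.inl ⟨a, ha, b, hb, rfl⟩)
      · rintro (rfl | ⟨a, ha, b, hb, rfl⟩ | ⟨a, ha, rfl⟩)
        · exact ⟨x, Or.inl rfl, x, Or.inl rfl, rfl⟩
        · exact ⟨a, Or.inr ha, b, Or.inr hb, rfl⟩
        · exact ⟨a, Or.inr ha, x, Or.inl rfl, by omega⟩
    rw [key]
    have hS : ∀ z ∈ A' + A', z ≤ 2*M := by
      intro z hz
      rw [Finset.mem_add] at hz
      obtain ⟨a, ha, b, hb, rfl⟩ := hz
      have := hxM a ha; have := hxM b hb; omega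
    have hT : ∀ z ∈ A'.image (· + x), 2*M < z ∧ z < x + x := by
      intro z hz
      rw [Finset.mem_image] at hz
      obtain ⟨a, ha, rfl⟩ := hz
      have := hxM a ha; have := hpos a ha; omega
    have hnotmem : x + x ∉ (A'+A') ∪ A'.image (· + x) := by
      intro h
      rcases Finset.mem_union.1 h with h | h
      · have := hS _ h; omega
      · have := (hT _ h).2; omega
    have hdisj : Disjoint (A'+A') (A'.image (· + x)) := by
      rw [Finset.disjoint_left]
      intro z hz hz'
      have := hS z hz
      have := (hT z hz').1
      omega
    rw [card_insert_of_notMem hnotmem, Finset.card_union_of_disjoint hdisj,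
      Finset.card_image_of_injective _ (add_left_injective x)]

lemma main_lemma (n : ℕ) (hn : 2 ≤ n) : ∀ t, 2*n-1 ≤ t → t ≤ n*(n+1)/2 →
    ∃ A : Finset ℕ, (∀ a ∈ A, 0 < a) ∧ A.card = n ∧ (A+A).card = t := by
  induction n, hn using Nat.le_induction with
  | base =>
    intro t ht1 ht2
    have ht : t = 3 := by omega
    subst ht
    exact ⟨{1, 2}, by decide, by decide, by decide⟩
  | succ n hn ih =>
    intro t ht1 ht2
    by_cases h : t ≤ 3*n
    · obtain ⟨A, g1, g2, g3⟩ := block_lemma (n+1) (t-n) (by omega) (by omega) (by omega)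
      exact ⟨A, g1, g2, by omega⟩
    · have hef : (n+1)*(n+1+1) = n*(n+1) + 2*(n+1) := by ring
      have hpar : n*(n+1) % 2 = 0 := Nat.even_iff.mp (Nat.even_mul_succ_self n)
      obtain ⟨A', h1, h2, h3⟩ := ih (t-(n+1)) (by omega) (by omega)
      have hne : A'.Nonempty := Finset.card_pos.mp (by omega)
      obtain ⟨A, g1, g2, g3⟩ := step_lemma A' h1 hne
      exact ⟨A, g1, by omega, by omega⟩

theorem stmt_18 (n t : ℕ) (hn : 2 ≤ n) (ht1 : 2 * n - 1 ≤ t) (ht2 : t ≤ n * (n + 1) / 2) :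
    (∃ A : Finset ℕ, (∀ a ∈ A, 0 < a) ∧ A.card = n ∧ (A + A).card = t) ∧
      (∃ B : Finset ℕ, (∀ b ∈ B, 0 < b) ∧ B.card = n ∧ (B * B).card = t) := by
  obtain ⟨A, h1, h2, h3⟩ := main_lemma n hn t ht1 ht2
  refine ⟨⟨A, h1, h2, h3⟩, ⟨A.image (2 ^ ·), ?_, ?_, ?_⟩⟩
  · intro b hb
    rw [Finset.mem_image] at hb
    obtain ⟨a, _, rfl⟩ := hb
    positivity
  · rw [Finset.card_image_of_injective _ (Nat.pow_right_injective le_rfl)]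
    exact h2
  · have key : A.image (2 ^ ·) * A.image (2 ^ ·) = (A+A).image (2 ^ ·) := by
      ext y
      simp only [Finset.mem_mul, Finset.mem_image, Finset.mem_add]
      constructor
      · rintro ⟨_, ⟨a, ha, rfl⟩, _, ⟨b, hb, rfl⟩, rfl⟩
        exact ⟨a+b, ⟨a, ha, b, hb, rfl⟩, pow_add 2 a b⟩
      · rintro ⟨_, ⟨a, ha, b, hb, rfl⟩, rfl⟩
        exact ⟨2^a, ⟨a, ha, rfl⟩, 2^b, ⟨b, hb, rfl⟩, (pow_add 2 a b).symm⟩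
    rw [key, Finset.card_image_of_injective _ (Nat.pow_right_injective le_rfl), h3]
end

section
/- If A is a finite set of n ≥ 2 real numbers with |A+A| = 2n − 1, then A is an arithmetic progression. -/
open Finset Pointwise

theorem stmt_19 (n : ℕ) (hn : 2 ≤ n) (A : Finset ℝ) (hA : A.card = n)
    (h : (A + A).card = 2 * n - 1) :
    ∃ a d : ℝ, 0 < d ∧ A = (Finset.range n).image (fun i : ℕ => a + (i : ℝ) * d) := by
  have hn0 : 0 < n := by omega
  set f : Fin n → ℝ := ⇑(A.orderEmbOfFin hA) with hf
  have hmono : StrictMono f := (A.orderEmbOfFin hA).strictMono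
  have hmem : ∀ i, f i ∈ A := fun i => A.orderEmbOfFin_mem hA i
  set e : ℕ → ℝ := fun i => f ⟨min i (n-1), by omega⟩ with he
  have he_eq : ∀ i (hi : i < n), e i = f ⟨i, hi⟩ := by
    intro i hi
    simp only [he]
    congr 1
    ext
    simp; omega
  have he_mem : ∀ i, e i ∈ A := fun i => hmem _
  have he_lt : ∀ i j, j < n → i < j → e i < e j := by
    intro i j hj hij
    rw [he_eq i (by omega), he_eq j hj]
    exact hmono (by simpa using hij)
  set c : ℕ → ℝ := fun k => e (k/2) + e ((k+1)/2) with hc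
  have hc_lt : ∀ k l, l < 2*n-1 → k < l → c k < c l := by
    intro k l hl hkl
    induction l with
    | zero => omega
    | succ m ih =>
      have hstep : c m < c (m+1) := by
        simp only [hc]
        rcases Nat.even_or_odd m with ⟨t, ht⟩ | ⟨t, ht⟩
        · subst ht
          have h1 : (t+t)/2 = t := by omega
          have h2 : (t+t+1)/2 = t := by omega
          have h3 : (t+t+1+1)/2 = t+1 := by omega
          rw [h1, h2, h3]
          have := he_lt t (t+1) (by omega) (by omega)
          linarith
        · subst ht
          have h1 : (2*t+1)/2 = t := by omega
          have h2 : (2*t+1+1)/2 = t+1 := by omega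
          have h3 : (2*t+1+1+1)/2 = t+1 := by omega
          rw [h1, h2, h3]
          have := he_lt t (t+1) (by omega) (by omega)
          linarith
      rcases Nat.lt_succ_iff_lt_or_eq.mp hkl with h' | h'
      · exact lt_trans (ih (by omega) h') hstep
      · subst h'; exact hstep
  have hc_mem : ∀ k, c k ∈ A + A := fun k => add_mem_add (he_mem _) (he_mem _)
  have himg : (Finset.range (2*n-1)).image c = A + A := by
    apply Finset.eq_of_subset_of_card_le
    · intro x hx
      simp only [mem_image, mem_range] at hx
      obtain ⟨k, _, rfl⟩ := hx
      exact hc_mem k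
    · rw [h, Finset.card_image_of_injOn]
      · simp
      · intro a ha b hb hab
        simp only [coe_range, Set.mem_Iio] at ha hb
        rcases lt_trichotomy a b with h' | h' | h'
        · exact absurd hab (ne_of_lt (hc_lt a b hb h'))
        · exact h'
        · exact absurd hab.symm (ne_of_lt (hc_lt b a ha h'))
  have hkey : ∀ i, i + 2 < n → e i + e (i+2) = 2 * e (i+1) := by
    intro i hi
    have hs : e i + e (i+2) ∈ A + A := add_mem_add (he_mem _) (he_mem _)
    rw [← himg] at hs
    simp only [mem_image, mem_range] at hs
    obtain ⟨k, hk, hck⟩ := hs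
    have hlow : c (2*i+1) < e i + e (i+2) := by
      simp only [hc]
      have h1 : (2*i+1)/2 = i := by omega
      have h2 : (2*i+1+1)/2 = i+1 := by omega
      rw [h1, h2]
      have := he_lt (i+1) (i+2) (by omega) (by omega)
      linarith
    have hhigh : e i + e (i+2) < c (2*i+3) := by
      simp only [hc]
      have h1 : (2*i+3)/2 = i+1 := by omega
      have h2 : (2*i+3+1)/2 = i+2 := by omega
      rw [h1, h2]
      have := he_lt i (i+1) (by omega) (by omega)
      linarith
    have hk1 : 2*i+1 < k := by
      by_contra h'
      push_neg at h'
      rcases eq_or_lt_of_le h' with h'' | h''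
      · rw [h''] at hck; linarith
      · have := hc_lt k (2*i+1) (by omega) h''
        linarith
    have hk2 : k < 2*i+3 := by
      by_contra h'
      push_neg at h'
      rcases eq_or_lt_of_le h' with h'' | h''
      · rw [← h''] at hck; linarith
      · have := hc_lt (2*i+3) k hk h''
        linarith
    have hk3 : k = 2*i+2 := by omega
    subst hk3
    have h1 : (2*i+2)/2 = i+1 := by omega
    have h2 : (2*i+2+1)/2 = i+1 := by omega
    simp only [hc, h1, h2] at hck
    linarith
  set d : ℝ := e 1 - e 0 with hd
  have hd0 : 0 < d := by
    have := he_lt 0 1 (by omega) (by omega)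
    simp only [hd]; linarith
  have hei : ∀ i, i < n → e i = e 0 + i * d := by
    intro i
    induction i using Nat.strong_induction_on with
    | _ i ih =>
      intro hi
      match i with
      | 0 => simp
      | 1 => simp [hd]
      | (m+2) =>
        have h1 := ih m (by omega) (by omega)
        have h2 := ih (m+1) (by omega) (by omega)
        have h3 := hkey m (by omega)
        push_cast
        push_cast at h1 h2
        linarith
  refine ⟨e 0, d, hd0, ?_⟩
  apply Finset.eq_of_subset_of_card_le
  · intro x hx
    have hx' : ∃ j : Fin n, f j = x := by
      have hr := A.range_orderEmbOfFin hA
      rw [Set.ext_iff] at hr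
      exact (hr x).mpr (by exact_mod_cast hx)
    obtain ⟨j, rfl⟩ := hx'
    simp only [mem_image, mem_range]
    refine ⟨j, j.isLt, ?_⟩
    rw [← hei j j.isLt, he_eq j j.isLt]
  · rw [hA]
    exact Finset.card_image_le.trans (by simp)
end
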